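/- arXiv:2305.13554 — 9 statements merged into one kernel-verified Lean document; each statement's English description precedes it below -/
import Mathlib

section
/- Let h be a polynomial with complex coefficients, let r > 0 and s ∈ ℝ, and let 𝔲, 𝔳, 𝔷 be holomorphic disk components such that 𝔲(ζ)·𝔳(ζ) = h(𝔷(ζ)) for all ζ ∈ 𝔻, 𝔷 has no zeros on 𝔻, and for every ζ with |ζ| = 1 one has |𝔷(ζ)| = r and |𝔲(ζ)|² − |𝔳(ζ)|² = 2s. Then 𝔷 is constant on 𝔻; and if moreover h(𝔷(0)) ≠ 0, then 𝔲 and 𝔳 are also constant on 𝔻. -/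
/-!
By the maximum principle applied to `z` and to `1 / z`, a nonvanishing holomorphic function of
constant modulus on the boundary circle has constant modulus on the disk, hence is constant. Once
`z` is constant, `u v = h(z(0))` is a nonzero constant, and on the boundary `|u|` and `|v|` are
then determined by `|u| |v| = |h(z(0))|` and `|u|² - |v|² = 2s`, so `u` is constant by the same
argument, and so is `v = h(z(0)) / u`.
-/

/-- A *holomorphic disk component*: a function on the closed unit disk `𝔻 ⊆ ℂ` which is
continuous on `𝔻` and complex differentiable on the open unit disk. -/
def IsHolomorphicDiskComponent (f : ℂ → ℂ) : Prop :=
  ContinuousOn f (Metric.closedBall 0 1) ∧ DifferentiableOn ℂ f (Metric.ball 0 1)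

open Metric Set Function Bornology

theorem DiffContOnCl.eqOn_closure_of_ne_zero_of_norm_eq_on_frontier {E : Type*}
    [NormedAddCommGroup E] [NormedSpace ℂ E] [Nontrivial E] {f : E → ℂ} {U : Set E} {c : E}
    {ρ : ℝ} (hf : DiffContOnCl ℂ f U) (hU : IsBounded U) (hconn : IsPreconnected U)
    (ho : IsOpen U) (hcU : c ∈ U) (hne : ∀ x ∈ closure U, f x ≠ 0)
    (hρ : ∀ x ∈ frontier U, ‖f x‖ = ρ) :
    EqOn f (const E (f c)) (closure U) := by
  have hc : c ∈ closure U := subset_closure hcU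
  have hle : ∀ x ∈ closure U, ‖f x‖ ≤ ρ := fun x hx =>
    Complex.norm_le_of_forall_mem_frontier_norm_le hU hf (fun y hy => (hρ y hy).le) hx
  have hρ_pos : 0 < ρ := (norm_pos_iff.2 (hne c hc)).trans_le (hle c hc)
  have hinv_le : ‖(f c)⁻¹‖ ≤ ρ⁻¹ :=
    Complex.norm_le_of_forall_mem_frontier_norm_le hU (hf.inv hne)
      (fun y hy => by rw [Pi.inv_apply, norm_inv, hρ y hy]) hc
  have hρ_le : ρ ≤ ‖f c‖ := by
    rw [norm_inv] at hinv_le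
    exact (inv_le_inv₀ (norm_pos_iff.2 (hne c hc)) hρ_pos).1 hinv_le
  exact Complex.eqOn_closure_of_isPreconnected_of_isMaxOn_norm hconn ho hf hcU
    fun x hx => (hle x (subset_closure hx)).trans hρ_le

theorem IsHolomorphicDiskComponent.diffContOnCl {f : ℂ → ℂ} (hf : IsHolomorphicDiskComponent f) :
    DiffContOnCl ℂ f (ball 0 1) :=
  ⟨hf.2, by rw [closure_ball 0 one_ne_zero]; exact hf.1⟩

theorem IsHolomorphicDiskComponent.eq_of_ne_zero_of_norm_eq {f : ℂ → ℂ} {ρ : ℝ}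
    (hf : IsHolomorphicDiskComponent f) (hne : ∀ ζ ∈ closedBall (0 : ℂ) 1, f ζ ≠ 0)
    (hρ : ∀ ζ : ℂ, ‖ζ‖ = 1 → ‖f ζ‖ = ρ) :
    ∀ ζ ∈ closedBall (0 : ℂ) 1, f ζ = f 0 := by
  rw [← closure_ball 0 one_ne_zero] at hne ⊢
  refine hf.diffContOnCl.eqOn_closure_of_ne_zero_of_norm_eq_on_frontier (ρ := ρ) isBounded_ball
    (convex_ball 0 1).isPreconnected isOpen_ball (mem_ball_self one_pos) hne fun ζ hζ => ?_
  rw [frontier_ball 0 one_ne_zero, mem_sphere_zero_iff_norm] at hζ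
  exact hρ ζ hζ

theorem eq_of_mul_eq_of_sq_sub_sq_eq {a b a' b' : ℝ} (ha : 0 ≤ a) (ha' : 0 ≤ a')
    (hmul : a * b = a' * b') (hsub : a ^ 2 - b ^ 2 = a' ^ 2 - b' ^ 2) (hab : a * b ≠ 0) :
    a = a' := by
  have hfactor : (a ^ 2 - a' ^ 2) * (a ^ 2 * a' ^ 2 + (a * b) ^ 2) = 0 := by
    linear_combination a ^ 2 * a' ^ 2 * hsub + a ^ 2 * (a * b + a' * b') * hmul
  have hpos : 0 < a ^ 2 * a' ^ 2 + (a * b) ^ 2 := by positivity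
  have hsq : a ^ 2 = a' ^ 2 := sub_eq_zero.1 ((mul_eq_zero.1 hfactor).resolve_right hpos.ne')
  exact (sq_eq_sq₀ ha ha').1 hsq

theorem holomorphic_disk_constant_z_general
    (h : Polynomial ℂ) (r s : ℝ)
    (u v z : ℂ → ℂ)
    (hu : IsHolomorphicDiskComponent u)
    (hz : IsHolomorphicDiskComponent z)
    (huv : ∀ ζ ∈ Metric.closedBall (0:ℂ) 1, u ζ * v ζ = h.eval (z ζ))
    (hzne : ∀ ζ ∈ Metric.closedBall (0:ℂ) 1, z ζ ≠ 0)
    (hbz : ∀ ζ : ℂ, ‖ζ‖ = 1 → ‖z ζ‖ = r)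
    (hbuv : ∀ ζ : ℂ, ‖ζ‖ = 1 →
      ‖u ζ‖^2 - ‖v ζ‖^2 = 2 * s) :
    (∀ ζ ∈ Metric.closedBall (0:ℂ) 1, z ζ = z 0) ∧
    (h.eval (z 0) ≠ 0 →
      (∀ ζ ∈ Metric.closedBall (0:ℂ) 1, u ζ = u 0) ∧
      (∀ ζ ∈ Metric.closedBall (0:ℂ) 1, v ζ = v 0)) := by
  have hzc := hz.eq_of_ne_zero_of_norm_eq hzne hbz
  refine ⟨hzc, fun hc => ?_⟩
  have huvc : ∀ ζ ∈ closedBall (0 : ℂ) 1, u ζ * v ζ = h.eval (z 0) := fun ζ hζ => by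
    rw [huv ζ hζ, hzc ζ hζ]
  have hune : ∀ ζ ∈ closedBall (0 : ℂ) 1, u ζ ≠ 0 := fun ζ hζ hu0 =>
    hc (by rw [← huvc ζ hζ, hu0, zero_mul])
  have hbu : ∀ ζ : ℂ, ‖ζ‖ = 1 → ‖u ζ‖ = ‖u 1‖ := by
    intro ζ hζ
    have hmem : ζ ∈ closedBall (0 : ℂ) 1 := mem_closedBall_zero_iff.2 hζ.le
    have hone : (1 : ℂ) ∈ closedBall (0 : ℂ) 1 := mem_closedBall_zero_iff.2 norm_one.le
    refine eq_of_mul_eq_of_sq_sub_sq_eq (norm_nonneg _) (norm_nonneg _) ?_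
      ((hbuv ζ hζ).trans (hbuv 1 norm_one).symm) ?_
    · rw [← norm_mul, ← norm_mul, huvc ζ hmem, huvc 1 hone]
    · rw [← norm_mul, huvc ζ hmem]
      exact norm_ne_zero_iff.2 hc
  have huc := hu.eq_of_ne_zero_of_norm_eq hune hbu
  have h0 : (0 : ℂ) ∈ closedBall (0 : ℂ) 1 := mem_closedBall_self zero_le_one
  refine ⟨huc, fun ζ hζ => mul_left_cancel₀ (hune 0 h0) ?_⟩
  calc u 0 * v ζ = u ζ * v ζ := by rw [huc ζ hζ]
    _ = u 0 * v 0 := by rw [huvc ζ hζ, huvc 0 h0]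

/-- A holomorphic disk `(𝔲, 𝔳, 𝔷)` in `{uv = h(z)}` avoiding `z = 0` whose
boundary lies in the Lagrangian fiber `{½(|u|²−|v|²) = s, |z| = r}` has constant
`z`-component; and if moreover `h(𝔷(0)) ≠ 0` then `𝔲` and `𝔳` are also constant. -/
theorem holomorphic_disk_constant_z
    (h : Polynomial ℂ) (r s : ℝ) (hr : 0 < r)
    (u v z : ℂ → ℂ)
    (hu : IsHolomorphicDiskComponent u)
    (hv : IsHolomorphicDiskComponent v)
    (hz : IsHolomorphicDiskComponent z)
    (huv : ∀ ζ ∈ Metric.closedBall (0:ℂ) 1, u ζ * v ζ = h.eval (z ζ))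
    (hzne : ∀ ζ ∈ Metric.closedBall (0:ℂ) 1, z ζ ≠ 0)
    (hbz : ∀ ζ : ℂ, ‖ζ‖ = 1 → ‖z ζ‖ = r)
    (hbuv : ∀ ζ : ℂ, ‖ζ‖ = 1 →
      ‖u ζ‖^2 - ‖v ζ‖^2 = 2 * s) :
    (∀ ζ ∈ Metric.closedBall (0:ℂ) 1, z ζ = z 0) ∧
    (h.eval (z 0) ≠ 0 →
      (∀ ζ ∈ Metric.closedBall (0:ℂ) 1, u ζ = u 0) ∧
      (∀ ζ ∈ Metric.closedBall (0:ℂ) 1, v ζ = v 0)) :=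
  holomorphic_disk_constant_z_general h r s u v z hu hz huv hzne hbz hbuv
end

section
/- Let (s,r) ∈ ℝ × ℝ_{>0} and assume (s,r) ≠ (0, |a_k|) for every 0 ≤ k ≤ n. Then there exists a nonconstant triple of holomorphic disk components 𝔲, 𝔳, 𝔷 with (𝔲(ζ), 𝔳(ζ), 𝔷(ζ)) ∈ X for all ζ ∈ 𝔻 and (𝔲(ζ), 𝔳(ζ), 𝔷(ζ)) ∈ L_{(s,r)} for all ζ with |ζ| = 1, if and only if r = |a_k| for some 0 ≤ k ≤ n. -/
open Metric Set

namespace IsHolomorphicDiskComponent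

variable {f : ℂ → ℂ}

lemma diffContOnCl_s1 (hf : IsHolomorphicDiskComponent f) : DiffContOnCl ℂ f (ball 0 1) :=
  ⟨hf.2, by rw [closure_ball 0 one_ne_zero]; exact hf.1⟩

lemma linear (c : ℂ) : IsHolomorphicDiskComponent (fun ζ => c * ζ) :=
  ⟨(continuous_const_mul c).continuousOn, (differentiable_id.const_mul c).differentiableOn⟩

lemma const (c : ℂ) : IsHolomorphicDiskComponent (fun _ => c) :=
  ⟨continuousOn_const, differentiableOn_const c⟩

lemma norm_le_of_norm_le_on_sphere (hf : IsHolomorphicDiskComponent f) {t : ℝ}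
    (hb : ∀ ζ : ℂ, ‖ζ‖ = 1 → ‖f ζ‖ ≤ t) : ∀ ζ ∈ closedBall (0 : ℂ) 1, ‖f ζ‖ ≤ t := by
  intro ζ hζ
  refine Complex.norm_le_of_forall_mem_frontier_norm_le isBounded_ball hf.diffContOnCl_s1
    (fun w hw => hb w ?_) (by rwa [closure_ball 0 one_ne_zero])
  rwa [frontier_ball 0 one_ne_zero, mem_sphere_zero_iff_norm] at hw

/-- The maximum principle applied to `f` and to `1 / f`. -/
lemma eq_apply_zero_of_norm_eq_on_sphere (hf : IsHolomorphicDiskComponent f) {t : ℝ}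
    (hb : ∀ ζ : ℂ, ‖ζ‖ = 1 → ‖f ζ‖ = t) (hf0 : ∀ ζ ∈ closedBall (0 : ℂ) 1, f ζ ≠ 0) :
    ∀ ζ ∈ closedBall (0 : ℂ) 1, f ζ = f 0 := by
  have h0 : (0 : ℂ) ∈ closedBall 0 1 := mem_closedBall_self zero_le_one
  have hinv : IsHolomorphicDiskComponent f⁻¹ :=
    ⟨hf.1.inv₀ hf0, hf.2.inv fun ζ hζ => hf0 ζ (ball_subset_closedBall hζ)⟩
  have hupper := hf.norm_le_of_norm_le_on_sphere fun ζ hζ => (hb ζ hζ).le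
  have ht : 0 < t := hb 1 norm_one ▸ norm_pos_iff.2 (hf0 1 (by simp))
  have hlower : ‖f 0‖⁻¹ ≤ t⁻¹ := by
    simpa using hinv.norm_le_of_norm_le_on_sphere (t := t⁻¹)
      (fun ζ hζ => by simp [hb ζ hζ]) 0 h0
  have hmax : IsMaxOn (norm ∘ f) (ball 0 1) 0 := fun ζ hζ =>
    calc ‖f ζ‖ ≤ t := hupper ζ (ball_subset_closedBall hζ)
      _ ≤ ‖f 0‖ := (inv_le_inv₀ (norm_pos_iff.2 (hf0 0 h0)) ht).1 hlower
  intro ζ hζ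
  refine Complex.eqOn_closure_of_isPreconnected_of_isMaxOn_norm
    (convex_ball 0 1).isPreconnected isOpen_ball hf.diffContOnCl_s1 (mem_ball_self one_pos) hmax ?_
  rwa [closure_ball 0 one_ne_zero]

end IsHolomorphicDiskComponent

lemma norm_sq_eq_of_mul_eq {u v c : ℂ} {s : ℝ} (huv : u * v = c)
    (hs : (1 / 2) * (‖u‖ ^ 2 - ‖v‖ ^ 2) = s) : ‖u‖ ^ 2 = s + √(s ^ 2 + ‖c‖ ^ 2) := by
  set q := √(s ^ 2 + ‖c‖ ^ 2)
  have hq : q ^ 2 = s ^ 2 + ‖c‖ ^ 2 := Real.sq_sqrt (by positivity)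
  have hqs : |s| ≤ q := by
    rw [← Real.sqrt_sq_eq_abs]; exact Real.sqrt_le_sqrt (by nlinarith [norm_nonneg c])
  have hc : ‖u‖ ^ 2 * ‖v‖ ^ 2 = ‖c‖ ^ 2 := by rw [← mul_pow, ← norm_mul, huv]
  have hroots : (‖u‖ ^ 2 - s - q) * (‖u‖ ^ 2 - s + q) = 0 := by nlinarith
  rcases mul_eq_zero.1 hroots with h | h
  · linarith
  · -- the other root `s - q` is `≤ 0`, so it is only possible when `u = 0` and `s = q = 0`
    have hu : ‖u‖ ^ 2 = 0 := le_antisymm (by linarith [le_abs_self s]) (by positivity)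
    have hs0 : s = 0 := le_antisymm (by nlinarith [sq_nonneg ‖v‖]) (by linarith [abs_nonneg s])
    linarith

lemma eq_apply_zero_of_mul_eq_const {u v : ℂ → ℂ} {c : ℂ} {s : ℝ}
    (hu : IsHolomorphicDiskComponent u) (hc : c ≠ 0)
    (huv : ∀ ζ ∈ closedBall (0 : ℂ) 1, u ζ * v ζ = c)
    (hs : ∀ ζ : ℂ, ‖ζ‖ = 1 → (1 / 2) * (‖u ζ‖ ^ 2 - ‖v ζ‖ ^ 2) = s) :
    ∀ ζ ∈ closedBall (0 : ℂ) 1, u ζ = u 0 ∧ v ζ = v 0 := by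
  have h0 : (0 : ℂ) ∈ closedBall 0 1 := mem_closedBall_self zero_le_one
  have hu0 : ∀ ζ ∈ closedBall (0 : ℂ) 1, u ζ ≠ 0 := fun ζ hζ hζ0 =>
    hc (by rw [← huv ζ hζ, hζ0, zero_mul])
  have hb : ∀ ζ : ℂ, ‖ζ‖ = 1 → ‖u ζ‖ = √(s + √(s ^ 2 + ‖c‖ ^ 2)) := fun ζ hζ => by
    rw [← norm_sq_eq_of_mul_eq (huv ζ (by simp [hζ])) (hs ζ hζ), Real.sqrt_sq (norm_nonneg _)]
  have huc := hu.eq_apply_zero_of_norm_eq_on_sphere hb hu0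
  intro ζ hζ
  have huvζ := huv ζ hζ
  rw [huc ζ hζ] at huvζ
  exact ⟨huc ζ hζ, mul_left_cancel₀ (hu0 0 h0) (huvζ.trans (huv 0 h0).symm)⟩

lemma eq_apply_zero_of_mem_fiber {h u v z : ℂ → ℂ} {s r : ℝ}
    (hu : IsHolomorphicDiskComponent u) (hz : IsHolomorphicDiskComponent z)
    (hX : ∀ ζ ∈ closedBall (0 : ℂ) 1, u ζ * v ζ = h (z ζ) ∧ z ζ ≠ 0)
    (hL : ∀ ζ : ℂ, ‖ζ‖ = 1 → (1 / 2) * (‖u ζ‖ ^ 2 - ‖v ζ‖ ^ 2) = s ∧ ‖z ζ‖ = r)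
    (hh : ∀ w : ℂ, ‖w‖ = r → h w ≠ 0) :
    ∀ ζ ∈ closedBall (0 : ℂ) 1, (u ζ, v ζ, z ζ) = (u 0, v 0, z 0) := by
  have hzc := hz.eq_apply_zero_of_norm_eq_on_sphere (fun ζ hζ => (hL ζ hζ).2)
    (fun ζ hζ => (hX ζ hζ).2)
  have hz0 : ‖z 0‖ = r := hzc 1 (by simp) ▸ (hL 1 norm_one).2
  have huvc := eq_apply_zero_of_mul_eq_const hu (hh _ hz0)
    (fun ζ hζ => by rw [(hX ζ hζ).1, hzc ζ hζ]) (fun ζ hζ => (hL ζ hζ).1)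
  intro ζ hζ
  rw [(huvc ζ hζ).1, (huvc ζ hζ).2, hzc ζ hζ]

lemma exists_nonconstant_disk_of_ne_zero {s : ℝ} (hs : s ≠ 0) :
    ∃ u v : ℂ → ℂ, IsHolomorphicDiskComponent u ∧ IsHolomorphicDiskComponent v ∧
      (∀ ζ, u ζ * v ζ = 0) ∧ (∀ ζ : ℂ, ‖ζ‖ = 1 → (1 / 2) * (‖u ζ‖ ^ 2 - ‖v ζ‖ ^ 2) = s) ∧
      (u 1, v 1) ≠ (u 0, v 0) := by
  have hprod : √(2 * s⁺) * √(2 * s⁻) = 0 := by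
    rcases le_total 0 s with h | h <;> simp [h]
  refine ⟨fun ζ => (√(2 * s⁺) : ℂ) * ζ, fun ζ => (√(2 * s⁻) : ℂ) * ζ,
    .linear _, .linear _, fun ζ => ?_, fun ζ hζ => ?_, ?_⟩
  · calc (√(2 * s⁺) : ℂ) * ζ * (√(2 * s⁻) * ζ)
          = ((√(2 * s⁺) * √(2 * s⁻) : ℝ) : ℂ) * ζ ^ 2 := by push_cast; ring
      _ = 0 := by rw [hprod, Complex.ofReal_zero, zero_mul]
  · simp only [norm_mul, Complex.norm_real, Real.norm_eq_abs, hζ, mul_one, sq_abs,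
      Real.sq_sqrt (by positivity : (0 : ℝ) ≤ 2 * s⁺),
      Real.sq_sqrt (by positivity : (0 : ℝ) ≤ 2 * s⁻)]
    linarith [posPart_sub_negPart s]
  · simpa using fun h : s ≤ 0 => h.lt_of_ne hs

theorem wall_location_general (n : ℕ) (a : Fin (n+1) → ℂ)
    (ha0 : ∀ k, a k ≠ 0)
    (s r : ℝ)
    (hsing : ∀ k : Fin (n+1), (s, r) ≠ ((0:ℝ), ‖a k‖)) :
    (∃ u v z : ℂ → ℂ,
      IsHolomorphicDiskComponent u ∧ IsHolomorphicDiskComponent v ∧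
      IsHolomorphicDiskComponent z ∧
      (∀ ζ ∈ Metric.closedBall (0:ℂ) 1,
        u ζ * v ζ = ∏ k, (z ζ - a k) ∧ z ζ ≠ 0) ∧
      (∀ ζ : ℂ, ‖ζ‖ = 1 →
        (1/2) * (‖u ζ‖^2 - ‖v ζ‖^2) = s ∧
        ‖z ζ‖ = r) ∧
      ¬ (∀ ζ ∈ Metric.closedBall (0:ℂ) 1, (u ζ, v ζ, z ζ) = (u 0, v 0, z 0)))
    ↔ ∃ k : Fin (n+1), r = ‖a k‖ := by
  constructor
  · rintro ⟨u, v, z, hu, -, hz, hX, hL, hnc⟩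
    by_contra! hwall
    refine hnc (eq_apply_zero_of_mem_fiber (h := fun w => ∏ k, (w - a k)) hu hz hX hL
      fun w hw => ?_)
    exact Finset.prod_ne_zero_iff.2 fun k _ hk => hwall k (by rw [← hw, sub_eq_zero.1 hk])
  · rintro ⟨k, rfl⟩
    obtain ⟨u, v, hu, hv, huv, hs, hnc⟩ :=
      exists_nonconstant_disk_of_ne_zero (s := s) fun hs0 => hsing k (by rw [hs0])
    refine ⟨u, v, fun _ => a k, hu, hv, .const _, fun ζ _ => ⟨?_, ha0 k⟩,
      fun ζ hζ => ⟨hs ζ hζ, rfl⟩, fun h => hnc ?_⟩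
    · rw [huv ζ, Finset.prod_eq_zero (Finset.mem_univ k) (sub_self _)]
    · simpa using h 1 (by simp)

/-- For `h(z) = ∏ (z - a k)` with the `a k` pairwise distinct and nonzero,
and a smooth base point `(s, r)` (i.e. `(s,r) ≠ (0, |a k|)` for all `k`), the Lagrangian
torus fiber `L_{(s,r)}` bounds a nonconstant holomorphic disk in `X = {uv = h(z)} ∖ {z = 0}`
if and only if `r = |a k|` for some `k` (the walls). -/
theorem wall_location (n : ℕ) (a : Fin (n+1) → ℂ)
    (ha : Function.Injective a) (ha0 : ∀ k, a k ≠ 0)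
    (s r : ℝ) (hr : 0 < r)
    (hsing : ∀ k : Fin (n+1), (s, r) ≠ ((0:ℝ), ‖a k‖)) :
    (∃ u v z : ℂ → ℂ,
      IsHolomorphicDiskComponent u ∧ IsHolomorphicDiskComponent v ∧
      IsHolomorphicDiskComponent z ∧
      (∀ ζ ∈ Metric.closedBall (0:ℂ) 1,
        u ζ * v ζ = ∏ k, (z ζ - a k) ∧ z ζ ≠ 0) ∧
      (∀ ζ : ℂ, ‖ζ‖ = 1 →
        (1/2) * (‖u ζ‖^2 - ‖v ζ‖^2) = s ∧
        ‖z ζ‖ = r) ∧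
      ¬ (∀ ζ ∈ Metric.closedBall (0:ℂ) 1, (u ζ, v ζ, z ζ) = (u 0, v 0, z 0)))
    ↔ ∃ k : Fin (n+1), r = ‖a k‖ :=
  wall_location_general n a ha0 s r hsing
end

section
/- Let h be a nonconstant polynomial with complex coefficients having no repeated roots. Then for every s ∈ ℝ and every r > 0 the value ψ(s,r) is finite; for each fixed s the function r ↦ ψ(s,r) is strictly increasing on (0,∞); and for each fixed s one has ψ(s,r) → 0 as r → 0⁺ and ψ(s,r) → +∞ as r → +∞. -/
/-!
Write `ψ(s, r) = μₛ(closedBall 0 r)`, where `μₛ` is Lebesgue measure with the integrand of `ψ` as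
density. That density is `≥ 1`, so `μₛ` dominates Lebesgue measure: this gives strict
monotonicity (annuli have positive area) and the limit `∞`. Since `μₛ ≪ volume`, `μₛ {0} = 0`,
and continuity from above gives the limit `0` as soon as the disks have finite `μₛ`-measure.
For finiteness, `h' / h = ∑ₐ 1 / (z - a)` over the roots counted with multiplicity and
`|h| ≤ √(|h|² + s²)`, so off the roots the integrand is at most `1 + (M / 2) ∑ₐ |z - a|⁻¹` with
`M` a bound for `|h'|` on the disk, and `|z - a|⁻¹` is locally integrable in the plane.
-/

open MeasureTheory

/-- The reduced Kähler area function of the `Aₙ`-smoothing `{uv = h(z)}`: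
`ψ(s,r)` is the Lebesgue (area) integral over the closed disk of radius `r` in `ℂ` of
`1 + |h′(z)|² / (2·√(|h(z)|² + s²))`, valued in `[0,∞]`. -/
noncomputable def psiArea (h : Polynomial ℂ) (s r : ℝ) : ENNReal :=
  ∫⁻ z in Metric.closedBall (0:ℂ) r,
    ENNReal.ofReal
      (1 + ‖(Polynomial.derivative h).eval z‖^2 /
        (2 * Real.sqrt (‖h.eval z‖^2 + s^2)))

open Metric Set Filter Topology Polynomial
open scoped ENNReal

section Measures

variable {α : Type*} [MeasurableSpace α]

theorem measure_lt_measure_of_le_of_lt {μ ν : Measure α} (hνμ : ν ≤ μ) {s t : Set α}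
    (hst : s ⊆ t) (hs : MeasurableSet s) (hμs : μ s ≠ ∞) (hν : ν s < ν t) : μ s < μ t := by
  have hpos : 0 < ν (t \ s) := (tsub_pos_of_lt hν).trans_le le_measure_sdiff
  calc μ s < μ s + μ (t \ s) := ENNReal.lt_add_right hμs (hpos.trans_le (hνμ _)).ne'
    _ = μ t := by rw [measure_add_sdiff hs.nullMeasurableSet, union_eq_right.2 hst]

theorem tendsto_measure_closedBall_atTop [PseudoMetricSpace α] (μ : Measure α) (x : α) :
    Tendsto (fun r => μ (closedBall x r)) atTop (𝓝 (μ univ)) := by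
  have hunion : (⋃ r : ℝ, closedBall x r) = univ :=
    eq_univ_of_forall fun y => mem_iUnion.2 ⟨dist y x, mem_closedBall.2 le_rfl⟩
  simpa only [hunion, Function.comp_def] using tendsto_measure_iUnion_atTop (μ := μ)
    (s := fun r => closedBall x r) fun _ _ hr => closedBall_subset_closedBall hr

theorem tendsto_measure_closedBall_nhdsGT_zero [MetricSpace α] [OpensMeasurableSpace α]
    {μ : Measure α} {x : α} (hμ : ∃ R > 0, μ (closedBall x R) ≠ ∞) (hx : μ {x} = 0) :
    Tendsto (fun r => μ (closedBall x r)) (𝓝[>] 0) (𝓝 0) := by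
  obtain ⟨R, hR, hμR⟩ := hμ
  have hlim := tendsto_measure_cthickening (μ := μ) (s := {x})
    ⟨R, hR, by rwa [cthickening_singleton x hR.le]⟩
  rw [closure_singleton, hx] at hlim
  refine (hlim.mono_left nhdsWithin_le_nhds).congr' ?_
  filter_upwards [self_mem_nhdsWithin] with r hr
  rw [cthickening_singleton x (le_of_lt hr)]

end Measures

theorem Complex.volume_closedBall_lt_volume_closedBall (x : ℂ) {r₁ r₂ : ℝ} (hr₂ : 0 < r₂)
    (hr : r₁ < r₂) : volume (closedBall x r₁) < volume (closedBall x r₂) := by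
  simp only [Complex.volume_closedBall]
  gcongr
  · exact_mod_cast NNReal.pi_pos.ne'
  · simp
  · exact ENNReal.ofReal_lt_ofReal_iff'.2 ⟨hr, hr₂⟩

theorem strictMonoOn_measure_closedBall_of_volume_le {μ : Measure ℂ}
    [IsFiniteMeasureOnCompacts μ] (hμ : volume ≤ μ) (x : ℂ) :
    StrictMonoOn (fun r => μ (closedBall x r)) (Ioi 0) := fun _ _ _ hr₂ hr =>
  measure_lt_measure_of_le_of_lt hμ (closedBall_subset_closedBall hr.le) measurableSet_closedBall
    measure_closedBall_lt_top.ne (Complex.volume_closedBall_lt_volume_closedBall x hr₂ hr)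

section InvNorm

variable {E : Type*} [NormedAddCommGroup E] [NormedSpace ℝ E] [FiniteDimensional ℝ E]
  [MeasurableSpace E] [BorelSpace E] (μ : Measure E) [μ.IsAddHaarMeasure]

theorem locallyIntegrable_inv_norm_sub (hE : 1 < Module.finrank ℝ E) (a : E) :
    LocallyIntegrable (fun x => ‖x - a‖⁻¹) μ := by
  have h0 : LocallyIntegrable (fun x : E => ‖x‖⁻¹) μ :=
    locallyIntegrable_of_norm_le_rpow (C := 1) (α := 1) hE.le (by exact_mod_cast hE)
      (ae_of_all _ fun x => by simp [Real.rpow_neg_one]) (by fun_prop)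
  rw [← (measurePreserving_sub_right μ a).map_eq] at h0
  exact (locallyIntegrable_map_homeomorph (Homeomorph.subRight a)).1 h0

theorem locallyIntegrable_multiset_sum_inv_norm_sub (hE : 1 < Module.finrank ℝ E)
    (m : Multiset E) : LocallyIntegrable (fun x => (m.map fun a => ‖x - a‖⁻¹).sum) μ := by
  induction m using Multiset.induction_on with
  | empty => simpa using locallyIntegrable_zero
  | cons a m ih =>
    simp only [Multiset.map_cons, Multiset.sum_cons]
    exact (locallyIntegrable_inv_norm_sub μ hE a).add ih

end InvNorm

theorem Polynomial.Splits.norm_eval_derivative_le {K : Type*} [NormedField K] {f : K[X]}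
    (hf : f.Splits) {x : K} (hx : f.eval x ≠ 0) :
    ‖f.derivative.eval x‖ ≤ ‖f.eval x‖ * (f.roots.map fun a => ‖x - a‖⁻¹).sum := by
  rw [hf.eval_derivative_eq_eval_mul_sum hx, norm_mul]
  gcongr
  refine (norm_multiset_sum_le _).trans_eq ?_
  simp [Multiset.map_map]

noncomputable def psiDensity (h : ℂ[X]) (s : ℝ) (z : ℂ) : ℝ :=
  1 + ‖h.derivative.eval z‖ ^ 2 / (2 * √(‖h.eval z‖ ^ 2 + s ^ 2))

theorem measurable_psiDensity (h : ℂ[X]) (s : ℝ) : Measurable (psiDensity h s) := by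
  have := h.continuous.measurable
  have := h.derivative.continuous.measurable
  unfold psiDensity
  fun_prop

theorem one_le_psiDensity (h : ℂ[X]) (s : ℝ) (z : ℂ) : 1 ≤ psiDensity h s z :=
  le_add_of_nonneg_right (by positivity)

theorem psiDensity_le_of_eval_ne_zero {h : ℂ[X]} (s : ℝ) {z : ℂ} (hz : h.eval z ≠ 0) {M : ℝ}
    (hM : ‖h.derivative.eval z‖ ≤ M) :
    psiDensity h s z ≤ 1 + M / 2 * (h.roots.map fun a => ‖z - a‖⁻¹).sum := by
  have hlog := (IsAlgClosed.splits h).norm_eval_derivative_le hz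
  have hpos : 0 < ‖h.eval z‖ := norm_pos_iff.2 hz
  have hsqrt : ‖h.eval z‖ ≤ √(‖h.eval z‖ ^ 2 + s ^ 2) :=
    Real.le_sqrt_of_sq_le (le_add_of_nonneg_right (sq_nonneg s))
  set S := (h.roots.map fun a => ‖z - a‖⁻¹).sum
  set A := ‖h.derivative.eval z‖
  set B := ‖h.eval z‖
  rw [psiDensity, add_le_add_iff_left]
  calc A ^ 2 / (2 * √(B ^ 2 + s ^ 2)) ≤ A ^ 2 / (2 * B) := by gcongr
    _ ≤ M * (B * S) / (2 * B) := by rw [sq]; gcongr; exact (norm_nonneg _).trans hM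
    _ = M / 2 * S := by field_simp

theorem locallyIntegrable_psiDensity (h : ℂ[X]) (s : ℝ) :
    LocallyIntegrable (psiDensity h s) volume := by
  rcases eq_or_ne h 0 with rfl | h0
  · have hconst : psiDensity 0 s = fun _ => 1 := funext fun z => by simp [psiDensity]
    exact hconst ▸ locallyIntegrable_const 1
  rw [locallyIntegrable_iff]
  intro K hK
  obtain ⟨M, hM⟩ := hK.exists_bound_of_continuousOn h.derivative.continuous.continuousOn
  have hroots : ∀ᵐ z : ℂ, h.eval z ≠ 0 :=
    measure_eq_zero_iff_ae_notMem.1 ((finite_setOfPred_isRoot h0).measure_zero volume)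
  have hbound : IntegrableOn (fun z => 1 + M / 2 * (h.roots.map fun a => ‖z - a‖⁻¹).sum) K :=
    ((locallyIntegrable_const 1).integrableOn_isCompact hK).add
      (((locallyIntegrable_multiset_sum_inv_norm_sub volume (by simp) h.roots).integrableOn_isCompact
        hK).const_mul _)
  refine hbound.mono' (measurable_psiDensity h s).aestronglyMeasurable ?_
  filter_upwards [ae_restrict_mem hK.measurableSet, ae_restrict_of_ae hroots] with z hzK hz
  rw [Real.norm_of_nonneg (zero_le_one.trans (one_le_psiDensity h s z))]
  exact psiDensity_le_of_eval_ne_zero s hz (hM z hzK)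

noncomputable def psiMeasure (h : ℂ[X]) (s : ℝ) : Measure ℂ :=
  volume.withDensity fun z => ENNReal.ofReal (psiDensity h s z)

theorem psiArea_eq_psiMeasure (h : ℂ[X]) (s : ℝ) :
    psiArea h s = fun r => psiMeasure h s (closedBall 0 r) :=
  funext fun _ => (withDensity_apply _ measurableSet_closedBall).symm

instance isFiniteMeasureOnCompacts_psiMeasure (h : ℂ[X]) (s : ℝ) :
    IsFiniteMeasureOnCompacts (psiMeasure h s) :=
  ⟨fun _ hK => by
    rw [psiMeasure, withDensity_apply _ hK.measurableSet]
    exact ((locallyIntegrable_psiDensity h s).integrableOn_isCompact hK).setLIntegral_lt_top⟩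

theorem volume_le_psiMeasure (h : ℂ[X]) (s : ℝ) : volume ≤ psiMeasure h s := by
  conv_lhs => rw [← withDensity_one (μ := volume)]
  exact withDensity_mono (ae_of_all _ fun z => by simpa using one_le_psiDensity h s z)

theorem psiArea_finite_strictMono_limits_general
    (h : Polynomial ℂ) :
    (∀ (s r : ℝ), 0 < r → psiArea h s r < ⊤) ∧
    (∀ s : ℝ, StrictMonoOn (fun r => psiArea h s r) (Set.Ioi (0:ℝ))) ∧
    (∀ s : ℝ, Filter.Tendsto (fun r => psiArea h s r)
        (nhdsWithin 0 (Set.Ioi (0:ℝ))) (nhds 0)) ∧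
    (∀ s : ℝ, Filter.Tendsto (fun r => psiArea h s r) Filter.atTop (nhds ⊤)) := by
  simp only [psiArea_eq_psiMeasure]
  refine ⟨fun s r _ => measure_closedBall_lt_top, fun s => ?_, fun s => ?_, fun s => ?_⟩
  · exact strictMonoOn_measure_closedBall_of_volume_le (volume_le_psiMeasure h s) 0
  · exact tendsto_measure_closedBall_nhdsGT_zero ⟨1, one_pos, measure_closedBall_lt_top.ne⟩
      (withDensity_absolutelyContinuous _ _ (measure_singleton 0))
  · have huniv : psiMeasure h s univ = ∞ :=
      top_le_iff.1 ((measure_univ_of_isAddLeftInvariant volume).symm.le.trans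
        (volume_le_psiMeasure h s univ))
    simpa only [huniv] using tendsto_measure_closedBall_atTop (psiMeasure h s) 0

/-- For a nonconstant polynomial `h` with no repeated roots: `ψ(s,r)` is
finite for every `s ∈ ℝ`, `r > 0`; for fixed `s` the map `r ↦ ψ(s,r)` is strictly
increasing on `(0,∞)`; and `ψ(s,r) → 0` as `r → 0⁺` while `ψ(s,r) → +∞` as `r → +∞`. -/
theorem psiArea_finite_strictMono_limits
    (h : Polynomial ℂ) (hdeg : 0 < h.natDegree) (hsq : Squarefree h) :
    (∀ (s r : ℝ), 0 < r → psiArea h s r < ⊤) ∧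
    (∀ s : ℝ, StrictMonoOn (fun r => psiArea h s r) (Set.Ioi (0:ℝ))) ∧
    (∀ s : ℝ, Filter.Tendsto (fun r => psiArea h s r)
        (nhdsWithin 0 (Set.Ioi (0:ℝ))) (nhds 0)) ∧
    (∀ s : ℝ, Filter.Tendsto (fun r => psiArea h s r) Filter.atTop (nhds ⊤)) :=
  psiArea_finite_strictMono_limits_general h
end

section
/- Assume in addition that each ψ_j : ℝ → ℝ is continuous. Then the map γ : ℝ² → ℝ^(n+3) is a topological embedding, i.e. a homeomorphism onto its image (with the subspace topology). -/
/-- The `(k+1)`-th *order statistic* of a finite multiset of reals: the entry at index `k`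
of the list sorted in nondecreasing order (junk value `0` if `k` is out of range). -/
noncomputable def orderStat (s : Multiset ℝ) (k : ℕ) : ℝ := (s.sort (· ≤ ·)).getD k 0

/-- The map `γ : ℝ² → ℝ^{n+3}`, `γ(s,c) = (γ₀(s,c), …, γ_{n+1}(s,c), s)` where
`γ_k(s,c) = {c, ψ 0 s, …, ψ n s}_[k]` is the `(k+1)`-th order statistic. -/
noncomputable def gammaMap (n : ℕ) (ψ : Fin (n+1) → ℝ → ℝ) (p : ℝ × ℝ) :
    Fin (n+3) → ℝ :=
  fun i => if (i : ℕ) = n + 2 then p.1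
    else orderStat (p.2 ::ₘ Finset.univ.val.map (fun j => ψ j p.1)) (i : ℕ)

/-! Since `ψ 0 s ≤ ⋯ ≤ ψ n s`, inserting `c` into this sorted list shows that `γ_k(s, c)` is `c`
clamped to `[ψ (k-1) s, ψ k s]` (with `ψ (-1) = -∞` and `ψ (n+1) = +∞`), a max/min of continuous
functions, so `γ` is continuous. Conversely the order statistics of a multiset sum to its sum, so
`(s, c)` is recovered continuously from `γ(s, c)`: `s` is the last coordinate and
`c = ∑_{k ≤ n+1} γ_k(s, c) - ∑_j ψ j s`. A continuous map with a continuous left inverse is an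
embedding. -/

namespace List

variable {α : Type*}

theorem getD_mem_or_eq_default (l : List α) (n : ℕ) (d : α) : l.getD n d ∈ l ∨ l.getD n d = d := by
  rcases lt_or_ge n l.length with hn | hn
  · exact .inl (getD_eq_getElem l d hn ▸ getElem_mem hn)
  · exact .inr (getD_eq_default l d hn)

variable [LinearOrder α]

theorem getD_orderedInsert_zero (c d : α) (l : List α) :
    (l.orderedInsert (· ≤ ·) c).getD 0 d = min c (l.getD 0 c) := by
  cases l with
  | nil => simp
  | cons a t => by_cases h : c ≤ a <;> simp [h, le_of_not_ge]

theorem getD_orderedInsert_succ {l : List α} (hl : l.Pairwise (· ≤ ·)) (c d : α) {k : ℕ}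
    (hk : k < l.length) :
    (l.orderedInsert (· ≤ ·) c).getD (k + 1) d = max l[k] (min c (l.getD (k + 1) c)) := by
  induction l generalizing k with
  | nil => simp at hk
  | cons a t ih =>
    rw [pairwise_cons] at hl
    have ha_le : ∀ x ∈ a :: t, a ≤ x := by simpa using hl.1
    by_cases hca : c ≤ a
    · have hc_le (m : ℕ) : c ≤ (a :: t).getD m c :=
        (getD_mem_or_eq_default _ m c).elim (fun h => hca.trans (ha_le _ h)) ge_of_eq
      have hc_getElem : c ≤ (a :: t)[k] := getD_eq_getElem _ c hk ▸ hc_le k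
      rw [orderedInsert_cons, if_pos hca, getD_cons_succ, getD_eq_getElem _ _ hk,
        min_eq_left (hc_le _), max_eq_left hc_getElem]
    · rw [orderedInsert_cons, if_neg hca, getD_cons_succ]
      cases k with
      | zero =>
        have ha_le' : a ≤ min c (t.getD 0 c) :=
          le_min (le_of_not_ge hca) <| (getD_mem_or_eq_default t 0 c).elim
            (fun h => ha_le _ (mem_cons_of_mem a h)) (fun h => h.symm ▸ le_of_not_ge hca)
        rw [getD_orderedInsert_zero, getElem_cons_zero, getD_cons_succ, max_eq_right ha_le']
      | succ k =>
        rw [ih hl.2 (by simpa using hk)]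
        rfl

end List

namespace Multiset

variable {α : Type*} (r : α → α → Prop) [DecidableRel r] [IsTrans α r] [Std.Antisymm r]
  [Std.Total r]

theorem sort_cons_eq_orderedInsert (a : α) (s : Multiset α) :
    (a ::ₘ s).sort r = (s.sort r).orderedInsert r a := by
  refine List.Perm.eq_of_pairwise' (pairwise_sort _ _) ((pairwise_sort _ _).orderedInsert a _) ?_
  rw [← coe_eq_coe, sort_eq, coe_eq_coe.mpr (List.perm_orderedInsert r a _), ← cons_coe, sort_eq]

end Multiset

theorem Monotone.sort_univ_val_map {α : Type*} [LinearOrder α] {n : ℕ} {x : Fin n → α}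
    (hx : Monotone x) : (Finset.univ.val.map x).sort (· ≤ ·) = List.ofFn x := by
  rw [Fin.univ_val_map, Multiset.coe_sort, List.mergeSort_eq_self _ hx.sortedLE_ofFn.pairwise]

section OrderStat

open Finset

theorem sum_range_orderStat (s : Multiset ℝ) :
    ∑ k ∈ range (Multiset.card s), orderStat s k = s.sum := by
  have h (i : Fin (s.sort (· ≤ ·)).length) : orderStat s i = (s.sort (· ≤ ·))[i.1] :=
    List.getD_eq_getElem _ _ i.2
  rw [← Multiset.length_sort (· ≤ ·), Finset.sum_range, Fintype.sum_congr _ _ h,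
    Fin.sum_univ_getElem, ← Multiset.sum_coe, Multiset.sort_eq]

variable {n : ℕ} {x : Fin (n + 1) → ℝ}

theorem orderStat_cons_univ_map (hx : Monotone x) (c : ℝ) (k : ℕ) :
    orderStat (c ::ₘ univ.val.map x) k = ((List.ofFn x).orderedInsert (· ≤ ·) c).getD k 0 := by
  rw [orderStat, Multiset.sort_cons_eq_orderedInsert, hx.sort_univ_val_map]

theorem orderStat_cons_univ_map_zero (hx : Monotone x) (c : ℝ) :
    orderStat (c ::ₘ univ.val.map x) 0 = min c (x 0) := by
  rw [orderStat_cons_univ_map hx, List.getD_orderedInsert_zero,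
    List.getD_eq_getElem _ _ (by simp), List.getElem_ofFn]
  rfl

theorem orderStat_cons_univ_map_succ (hx : Monotone x) (c : ℝ) (j : Fin n) :
    orderStat (c ::ₘ univ.val.map x) (j + 1) = max (x j.castSucc) (min c (x j.succ)) := by
  rw [orderStat_cons_univ_map hx,
    List.getD_orderedInsert_succ hx.sortedLE_ofFn.pairwise _ _ (by simp),
    List.getD_eq_getElem _ _ (by simp), List.getElem_ofFn, List.getElem_ofFn]
  rfl

theorem orderStat_cons_univ_map_last (hx : Monotone x) (c : ℝ) :
    orderStat (c ::ₘ univ.val.map x) (n + 1) = max (x (Fin.last n)) c := by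
  rw [orderStat_cons_univ_map hx,
    List.getD_orderedInsert_succ hx.sortedLE_ofFn.pairwise _ _ (by simp),
    List.getD_eq_default _ _ (by simp), min_self, List.getElem_ofFn]
  rfl

end OrderStat

section GammaMap

open Finset

variable {n : ℕ} {ψ : Fin (n + 1) → ℝ → ℝ}

theorem gammaMap_last (p : ℝ × ℝ) : gammaMap n ψ p (Fin.last _) = p.1 :=
  if_pos rfl

theorem gammaMap_castSucc (p : ℝ × ℝ) (k : Fin (n + 2)) :
    gammaMap n ψ p k.castSucc = orderStat (p.2 ::ₘ univ.val.map (ψ · p.1)) k :=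
  if_neg (Fin.val_ne_of_ne k.castSucc_lt_last.ne)

theorem continuous_gammaMap (hψ : ∀ s, Monotone fun j => ψ j s)
    (hcont : ∀ j, Continuous (ψ j)) : Continuous (gammaMap n ψ) := by
  have hcont' (j : Fin (n + 1)) : Continuous fun p : ℝ × ℝ => ψ j p.1 :=
    (hcont j).comp continuous_fst
  refine continuous_pi fun i => ?_
  induction i using Fin.lastCases with
  | last => simpa only [gammaMap_last] using continuous_fst
  | cast k =>
    simp only [gammaMap_castSucc]
    induction k using Fin.cases with
    | zero =>
      simpa only [Fin.val_zero, orderStat_cons_univ_map_zero (hψ _)] using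
        continuous_snd.min (hcont' 0)
    | succ j =>
      induction j using Fin.lastCases with
      | last =>
        simpa only [Fin.succ_last, Fin.val_last, orderStat_cons_univ_map_last (hψ _)] using
          (hcont' _).max continuous_snd
      | cast j =>
        simpa only [Fin.val_succ, Fin.val_castSucc, orderStat_cons_univ_map_succ (hψ _)] using
          (hcont' _).max (continuous_snd.min (hcont' _))

def gammaRetraction (n : ℕ) (ψ : Fin (n + 1) → ℝ → ℝ) (y : Fin (n + 3) → ℝ) : ℝ × ℝ :=
  (y (Fin.last _), ∑ k : Fin (n + 2), y k.castSucc - ∑ j, ψ j (y (Fin.last _)))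

theorem continuous_gammaRetraction (hcont : ∀ j, Continuous (ψ j)) :
    Continuous (gammaRetraction n ψ) := by
  unfold gammaRetraction
  fun_prop

theorem gammaRetraction_leftInverse :
    Function.LeftInverse (gammaRetraction n ψ) (gammaMap n ψ) := by
  rintro ⟨s, c⟩
  set M := c ::ₘ univ.val.map (ψ · s)
  have hcard : Multiset.card M = n + 2 := by simp [M]
  have hsum : ∑ k : Fin (n + 2), gammaMap n ψ (s, c) k.castSucc = c + ∑ j, ψ j s :=
    calc _ = ∑ k ∈ range (n + 2), orderStat M k := by
          simp only [gammaMap_castSucc]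
          exact Fin.sum_univ_eq_sum_range (orderStat M) (n + 2)
      _ = M.sum := by rw [← hcard, sum_range_orderStat]
      _ = c + ∑ j, ψ j s := Multiset.sum_cons _ _
  simp only [gammaRetraction, gammaMap_last, hsum, add_sub_cancel_right]

end GammaMap

/-- If each `ψ j : ℝ → ℝ` is continuous and `ψ 0 s < ⋯ < ψ n s` for every
`s`, then `γ : ℝ² → ℝ^{n+3}` is a topological embedding (a homeomorphism onto its image
with the subspace topology). -/
theorem gammaMap_isEmbedding (n : ℕ) (ψ : Fin (n+1) → ℝ → ℝ)
    (hord : ∀ s : ℝ, StrictMono fun j => ψ j s)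
    (hcont : ∀ j, Continuous (ψ j)) :
    Topology.IsEmbedding (gammaMap n ψ) :=
  gammaRetraction_leftInverse.isEmbedding (continuous_gammaRetraction hcont)
    (continuous_gammaMap (fun s => (hord s).monotone) hcont)
end

section
/- Let ψ_0 < ψ_1 < ⋯ < ψ_n be real numbers, let τ ≥ 0, let 0 ≤ k₀ ≤ n, and let c ∈ [k₀·τ + ψ_{k₀}, (k₀+1)·τ + ψ_{k₀}]. Then for every k ∈ {0, …, n+1}: {c − k·τ, ψ_0, …, ψ_n}_[k] = ψ_k if k ≤ k₀, and {c − k·τ, ψ_0, …, ψ_n}_[k] = ψ_{k−1} if k₀ + 1 ≤ k ≤ n+1. Consequently the vector ({c − k·τ, ψ_0, …, ψ_n}_[k])_{k=0}^{n+1} equals the corner point (ψ_0, …, ψ_{k₀}, ψ_{k₀}, ψ_{k₀+1}, …, ψ_n). -/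
theorem List.Pairwise.getD_eq_of_countP_lt_le_of_lt_countP_le {α : Type*} [LinearOrder α]
    {l : List α} (hl : l.Pairwise (· ≤ ·)) {k : ℕ} {v d : α}
    (hlt : l.countP (· < v) ≤ k) (hle : k < l.countP (· ≤ v)) : l.getD k d = v := by
  have hk : k < l.length := hle.trans_le List.countP_le_length
  have hsplit : l = l.take k ++ l[k] :: l.drop (k + 1) := by
    rw [← List.drop_eq_getElem_cons hk, List.take_append_drop]
  have hsorted := hsplit ▸ hl
  rw [List.pairwise_append, List.pairwise_cons] at hsorted
  obtain ⟨-, ⟨hafter, -⟩, hbefore⟩ := hsorted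
  have hbelow : ∀ a ∈ l.take k, a ≤ l[k] := fun a ha => hbefore a ha _ List.mem_cons_self
  have hlen : (l.take k).length = k := List.length_take_of_le hk.le
  rw [List.getD_eq_getElem _ _ hk]
  refine le_antisymm (not_lt.1 fun hvk => ?_) (not_lt.1 fun hkv => ?_)
  · have hdrop : (l[k] :: l.drop (k + 1)).countP (· ≤ v) = 0 := by
      refine List.countP_eq_zero.2 fun b hb => ?_
      simpa using hvk.trans_le ((List.mem_cons.1 hb).elim (fun h => h.ge) (hafter b))
    rw [hsplit, List.countP_append, hdrop] at hle
    exact (List.countP_le_length.trans hlen.le).not_gt (by omega)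
  · have htake : (l.take k).countP (· < v) = (l.take k).length :=
      List.countP_eq_length.2 fun a ha => by simpa using (hbelow a ha).trans_lt hkv
    rw [hsplit, List.countP_append, htake, hlen,
      List.countP_cons_of_pos (by simpa using hkv)] at hlt
    omega

theorem orderStat_eq_of_countP_lt_le_of_lt_countP_le {s : Multiset ℝ} {k : ℕ} {v : ℝ}
    (hlt : s.countP (· < v) ≤ k) (hle : k < s.countP (· ≤ v)) : orderStat s k = v := by
  rw [← s.sort_eq (· ≤ ·), Multiset.coe_countP] at hlt hle
  exact (s.pairwise_sort _).getD_eq_of_countP_lt_le_of_lt_countP_le hlt hle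

open Finset in
theorem StrictMono.countP_lt_map_univ {α : Type*} [LinearOrder α] {m : ℕ} {ψ : Fin m → α}
    (hψ : StrictMono ψ) (j : Fin m) : (univ.val.map ψ).countP (· < ψ j) = j := by
  simp only [Multiset.countP_map, hψ.lt_iff_lt, ← filter_val, filter_gt_eq_Iio]
  exact Fin.card_Iio j

open Finset in
theorem StrictMono.countP_le_map_univ {α : Type*} [LinearOrder α] {m : ℕ} {ψ : Fin m → α}
    (hψ : StrictMono ψ) (j : Fin m) : (univ.val.map ψ).countP (· ≤ ψ j) = j + 1 := by
  simp only [Multiset.countP_map, hψ.le_iff_le, ← filter_val, filter_ge_eq_Iic]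
  exact Fin.card_Iic j

section Insertion

open Finset

variable {m : ℕ} {ψ : Fin m → ℝ} {x : ℝ}

theorem orderStat_cons_of_le (hψ : StrictMono ψ) {j : Fin m} (hx : ψ j ≤ x) :
    orderStat (x ::ₘ univ.val.map ψ) j = ψ j := by
  apply orderStat_eq_of_countP_lt_le_of_lt_countP_le
  · rw [Multiset.countP_cons, if_neg hx.not_gt, hψ.countP_lt_map_univ, add_zero]
  · rw [Multiset.countP_cons, hψ.countP_le_map_univ]
    omega

theorem orderStat_cons_succ_of_ge (hψ : StrictMono ψ) {j : Fin m} (hx : x ≤ ψ j) :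
    orderStat (x ::ₘ univ.val.map ψ) (j + 1) = ψ j := by
  apply orderStat_eq_of_countP_lt_le_of_lt_countP_le
  · rw [Multiset.countP_cons, hψ.countP_lt_map_univ]
    split_ifs <;> omega
  · rw [Multiset.countP_cons, if_pos hx, hψ.countP_le_map_univ]
    omega

end Insertion

theorem Fin.insertNth_castSucc_self_apply {α : Type*} {n : ℕ} (p : Fin (n + 1) → α)
    (i : Fin (n + 1)) (k : Fin (n + 2)) :
    Fin.insertNth (α := fun _ => α) i.castSucc (p i) p k =
      if h : (k : ℕ) ≤ i then p ⟨k, h.trans_lt i.isLt⟩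
      else p ⟨k - 1, Nat.sub_one_lt_of_le (Nat.zero_lt_of_lt (not_le.1 h)) k.is_le⟩ := by
  rcases lt_trichotomy k i.castSucc with hlt | rfl | hgt
  · rw [Fin.insertNth_apply_below hlt, dif_pos (show (k : ℕ) ≤ i from hlt.le), eq_rec_constant]
    rfl
  · simp
  · rw [Fin.insertNth_apply_above hgt, dif_neg (show ¬(k : ℕ) ≤ i from hgt.not_ge),
      eq_rec_constant]
    rfl

/-- Let `ψ 0 < ⋯ < ψ n`, `τ ≥ 0`, `0 ≤ k₀ ≤ n`, and
`c ∈ [k₀·τ + ψ k₀, (k₀+1)·τ + ψ k₀]`.  Then `{c − k·τ, ψ 0, …, ψ n}_[k] = ψ k` for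
`k ≤ k₀` and `= ψ (k−1)` for `k₀+1 ≤ k ≤ n+1`; consequently the vector of these order
statistics is the corner point `(ψ 0, …, ψ k₀, ψ k₀, ψ (k₀+1), …, ψ n)`. -/
theorem orderStat_collapse (n : ℕ) (ψ : Fin (n+1) → ℝ) (hψ : StrictMono ψ)
    (τ : ℝ) (hτ : 0 ≤ τ) (k₀ : Fin (n+1)) (c : ℝ)
    (hc1 : ((k₀:ℕ):ℝ) * τ + ψ k₀ ≤ c)
    (hc2 : c ≤ (((k₀:ℕ):ℝ) + 1) * τ + ψ k₀) :
    (∀ k : Fin (n+2),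
      orderStat ((c - ((k:ℕ):ℝ) * τ) ::ₘ Finset.univ.val.map ψ) (k:ℕ)
        = if h : (k:ℕ) ≤ (k₀:ℕ) then ψ ⟨(k:ℕ), by omega⟩
          else ψ ⟨(k:ℕ) - 1, by omega⟩) ∧
    (fun k : Fin (n+2) =>
        orderStat ((c - ((k:ℕ):ℝ) * τ) ::ₘ Finset.univ.val.map ψ) (k:ℕ))
      = Fin.insertNth k₀.castSucc (ψ k₀) ψ := by
  have above {k : ℕ} (hk : k ≤ k₀) : ψ k₀ ≤ c - k * τ := by
    have : (k : ℝ) * τ ≤ k₀ * τ := by gcongr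
    linarith
  have below {k : ℕ} (hk : k₀ + 1 ≤ k) : c - k * τ ≤ ψ k₀ := by
    have : ((k₀ : ℝ) + 1) * τ ≤ k * τ := by gcongr; exact_mod_cast hk
    linarith
  refine (fun collapse => ⟨collapse, funext fun k =>
    (collapse k).trans (Fin.insertNth_castSucc_self_apply ψ k₀ k).symm⟩) fun k => ?_
  split_ifs with hk
  · exact orderStat_cons_of_le hψ (j := ⟨k, _⟩) ((hψ.monotone hk).trans (above hk))
  · obtain ⟨j, hj, hkj⟩ : ∃ j : Fin (n + 1), k₀ ≤ j ∧ (k : ℕ) = j + 1 :=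
      ⟨⟨k - 1, by omega⟩, Fin.le_def.2 (Nat.le_sub_one_of_lt (not_le.1 hk)),
        by dsimp; omega⟩
    rw [show ψ ⟨k - 1, _⟩ = ψ j from congrArg ψ (Fin.ext (by simp [hkj])), hkj]
    exact orderStat_cons_succ_of_ge hψ ((below (by omega)).trans (hψ.monotone hj))
end

section
/- Fix 1 ≤ i ≤ n and let D_i be the set of pairs (x, y) with x ∈ Λ^(n+2), y ∈ Λ, x_i = 0, ∏_{j=0}^{n+1} x_j = 1 + y, and such that there are no two indices p, q with |p − q| ≥ 2 and x_p = x_q = 0. Then on D_i one has y = −1 and val(y) = 0, every component F_k is real-valued on D_i, and F(D_i) = {(ψ_0(0), …, ψ_{i−1}(0), t, ψ_i(0), …, ψ_n(0), 0) : ψ_{i−1}(0) ≤ t ≤ ψ_i(0)}, the line segment of the broken line γ(0,·) joining the consecutive corner points A_{i−1}(0) and A_i(0). -/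
open Classical

/-- The Novikov field `Λ = ℂ((T^ℝ))`, modeled by Hahn series. -/
abbrev Nov : Type := HahnSeries ℝ ℂ

/-- The extended valuation `val : Λ → [−∞, +∞]`, with `val 0 = +∞`. -/
noncomputable def valE (x : Nov) : EReal := if x = 0 then ⊤ else ((x.order : ℝ) : EReal)

/-- The `(k+1)`-th *order statistic* of a finite multiset of extended reals: the entry at
index `k` of the list sorted in nondecreasing order (junk value `0` if out of range). -/
noncomputable def orderStatE (s : Multiset EReal) (k : ℕ) : EReal :=
  (s.sort (· ≤ ·)).getD k 0

/-- The tropically continuous fibration `F` in homogeneous coordinates, with values in the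
extended reals:
`F_k(x,y) = {Σ_j (j−k)·val(x_j) + k·min(0, val y), ψ 0 (val y), …, ψ n (val y)}_[k]`
for `0 ≤ k ≤ n+1` (sums and products of extended reals taken with the Mathlib `EReal`
conventions, in particular `0 · (±∞) = 0`, `m · (+∞) = +∞` for `m > 0` and `= −∞` for
`m < 0`), and last component `val y`.  The real argument of `ψ j` is the order of `y`. -/
noncomputable def FmapE (n : ℕ) (ψ : Fin (n+1) → ℝ → ℝ)
    (x : Fin (n+2) → Nov) (y : Nov) : Fin (n+3) → EReal :=
  fun i => if (i : ℕ) = n + 2 then valE y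
    else orderStatE
      (((∑ j : Fin (n+2), (((((j:ℕ):ℝ) - ((i:ℕ):ℝ)) : ℝ) : EReal) * valE (x j))
          + ((((i:ℕ):ℝ) : ℝ) : EReal) * min 0 (valE y))
        ::ₘ Finset.univ.val.map (fun j => ((ψ j y.order : ℝ) : EReal))) (i : ℕ)

/-! At `y = -1` (forced by `x_i = 0`) the term `k · min 0 (val y)` vanishes and `ψ_j (val y) = ψ_j 0`,
so `F_k` is the `k`-th order statistic of `{S_k, ψ_0 0, …, ψ_n 0}` with
`S_k = Σ_j (j - k) val x_j` (`weightedVal x k`). Inserting one value `v` into the sorted list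
`ψ_0 0 ≤ … ≤ ψ_n 0` puts at position `k` the value `v` clamped to `[ψ_{k-1} 0, ψ_k 0]`, where
`ψ_{-1} 0 = -∞` and `ψ_{n+1} 0 = +∞`. Since `val x_i = +∞`, the
term `(i - k) · (+∞)` makes `S_k = +∞` for `k < i` (the other vanishing coordinates sit at
`i ± 1`, so no `-∞` term competes) and `S_k = -∞` for `k > i`. Hence `F_k = ψ_k 0` for `k < i`,
`F_k = ψ_{k-1} 0` for `k > i`, and `F_i` is `S_i` clamped to `[ψ_{i-1} 0, ψ_i 0]`; every value
of that segment is attained by putting `x_{i+1} = T^t` and all other `x_j = 1` for `j ≠ i`. -/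

namespace List

variable {α : Type*} [LinearOrder α] [OrderTop α]

theorem le_getD_top_of_forall_le {b : α} {l : List α} (h : ∀ a ∈ l, b ≤ a) (k : ℕ) :
    b ≤ l.getD k ⊤ := by
  rw [getD_eq_getElem?_getD]
  cases hk : l[k]? with
  | none => exact le_top
  | some a => exact h a (mem_of_getElem? hk)

theorem Pairwise.getD_top_le_getD_top_succ {l : List α} (hl : l.Pairwise (· ≤ ·)) (k : ℕ) :
    l.getD k ⊤ ≤ l.getD (k + 1) ⊤ := by
  induction l generalizing k with
  | nil => simp
  | cons b t ih =>
    obtain ⟨hb, ht⟩ := pairwise_cons.mp hl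
    cases k with
    | zero => exact le_getD_top_of_forall_le hb 0
    | succ k => exact ih ht k

theorem getD_top_orderedInsert_zero (v : α) (l : List α) :
    (l.orderedInsert (· ≤ ·) v).getD 0 ⊤ = min v (l.getD 0 ⊤) := by
  cases l with
  | nil => simp
  | cons b t =>
    by_cases h : v ≤ b
    · simp [h]
    · simp [h, (not_le.mp h).le]

theorem Pairwise.getD_top_orderedInsert_succ {l : List α} (hl : l.Pairwise (· ≤ ·)) (v : α)
    (k : ℕ) :
    (l.orderedInsert (· ≤ ·) v).getD (k + 1) ⊤ = max (l.getD k ⊤) (min v (l.getD (k + 1) ⊤)) := by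
  induction l generalizing k with
  | nil => simp
  | cons b t ih =>
    obtain ⟨hb, ht⟩ := pairwise_cons.mp hl
    have hb' : ∀ j, b ≤ (b :: t).getD j ⊤ := le_getD_top_of_forall_le (by simpa using hb)
    by_cases hvb : v ≤ b
    · rw [orderedInsert_cons_of_le _ _ hvb, getD_cons_succ,
        min_eq_left (hvb.trans (hb' _)), max_eq_left (hvb.trans (hb' _))]
    · rw [orderedInsert_of_not_le _ _ hvb, getD_cons_succ]
      cases k with
      | zero =>
        rw [getD_top_orderedInsert_zero, getD_cons_zero, getD_cons_succ, max_eq_right]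
        exact le_min (not_le.mp hvb).le (le_getD_top_of_forall_le hb 0)
      | succ k => rw [ih ht, getD_cons_succ, getD_cons_succ]

theorem Pairwise.getD_top_orderedInsert_top {l : List α} (hl : l.Pairwise (· ≤ ·)) (k : ℕ) :
    (l.orderedInsert (· ≤ ·) ⊤).getD k ⊤ = l.getD k ⊤ := by
  cases k with
  | zero => rw [getD_top_orderedInsert_zero, min_top_left]
  | succ k =>
    rw [hl.getD_top_orderedInsert_succ, min_top_left,
      max_eq_right (hl.getD_top_le_getD_top_succ k)]

theorem orderedInsert_bot {β : Type*} [Preorder β] [OrderBot β] [DecidableLE β] (l : List β) :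
    l.orderedInsert (· ≤ ·) ⊥ = ⊥ :: l := by
  cases l <;> simp

theorem getD_ofFn {β : Type*} {N : ℕ} (f : Fin N → β) (j : Fin N) (d : β) :
    (ofFn f).getD j d = f j := by
  rw [getD_eq_getElem _ _ (by rw [length_ofFn]; exact j.is_lt), List.getElem_ofFn]

end List

theorem Multiset.sort_cons_coe_of_pairwise {α : Type*} [LinearOrder α] {l : List α}
    (hl : l.Pairwise (· ≤ ·)) (a : α) :
    (a ::ₘ (l : Multiset α)).sort (· ≤ ·) = l.orderedInsert (· ≤ ·) a := by
  simp [List.mergeSort_eq_insertionSort, hl.insertionSort_eq]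

theorem EReal.sum_eq_top_of_ne_bot {ι : Type*} {s : Finset ι} {f : ι → EReal} {i : ι}
    (hi : i ∈ s) (htop : f i = ⊤) (hbot : ∀ j ∈ s, f j ≠ ⊥) : ∑ j ∈ s, f j = ⊤ := by
  classical
  rw [← Finset.add_sum_erase _ _ hi, htop, EReal.top_add_of_ne_bot]
  intro h
  obtain ⟨j, hj, hj'⟩ := WithBot.sum_eq_bot_iff.mp h
  exact hbot j (Finset.mem_of_mem_erase hj) hj'

theorem EReal.exists_coe_eq_max_min {a b : ℝ} (hab : a ≤ b) (v : EReal) :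
    ∃ t : ℝ, a ≤ t ∧ t ≤ b ∧ max (a : EReal) (min v b) = t := by
  induction v using EReal.rec with
  | bot => exact ⟨a, le_rfl, hab, by simp⟩
  | top => exact ⟨b, hab, le_rfl, by simpa using hab⟩
  | coe r =>
    refine ⟨max a (min r b), le_max_left _ _, max_le hab (min_le_right _ _), ?_⟩
    rw [EReal.coe_strictMono.monotone.map_max, EReal.coe_strictMono.monotone.map_min]

theorem eq_neg_one_of_prod_eq_one_add {R ι : Type*} [CommRing R] [Fintype ι] {x : ι → R} {y : R}
    {i : ι} (hx : x i = 0) (h : ∏ j, x j = 1 + y) : y = -1 :=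
  (add_eq_zero_iff_neg_eq.mp (h ▸ Finset.prod_eq_zero (Finset.mem_univ i) hx)).symm

lemma valE_zero : valE 0 = ⊤ := if_pos rfl

lemma valE_of_ne_zero {x : Nov} (hx : x ≠ 0) : valE x = x.order := if_neg hx

lemma valE_ne_bot (x : Nov) : valE x ≠ ⊥ := by
  unfold valE
  split_ifs <;> simp

lemma valE_neg_one : valE (-1) = 0 := by
  rw [valE_of_ne_zero (neg_ne_zero.mpr one_ne_zero), HahnSeries.order_neg, HahnSeries.order_one,
    EReal.coe_zero]

noncomputable def weightedVal {N : ℕ} (x : Fin N → Nov) (k : ℕ) : EReal :=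
  ∑ j : Fin N, ((((j:ℕ):ℝ) - ((k:ℕ):ℝ) : ℝ) : EReal) * valE (x j)

lemma weightedVal_eq_top {N i k : ℕ} {x : Fin N → Nov} (hi : i < N) (hx : x ⟨i, hi⟩ = 0)
    (hki : k < i) (hzero : ∀ j, x j = 0 → k ≤ (j : ℕ)) : weightedVal x k = ⊤ := by
  refine EReal.sum_eq_top_of_ne_bot (Finset.mem_univ ⟨i, hi⟩) ?_ fun j _ => ?_
  · rw [hx, valE_zero]
    exact EReal.coe_mul_top_of_pos (by simpa using hki)
  · refine (EReal.mul_ne_bot _ _).mpr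
      ⟨.inl (EReal.coe_ne_bot _), .inr (valE_ne_bot _), .inl (EReal.coe_ne_top _), ?_⟩
    by_cases hj : x j = 0
    · exact .inl (EReal.coe_nonneg.mpr (sub_nonneg.mpr (by exact_mod_cast hzero j hj)))
    · exact .inr (by rw [valE_of_ne_zero hj]; exact EReal.coe_ne_top _)

lemma weightedVal_eq_bot {N i k : ℕ} {x : Fin N → Nov} (hi : i < N) (hx : x ⟨i, hi⟩ = 0)
    (hik : i < k) : weightedVal x k = ⊥ :=
  WithBot.sum_eq_bot_iff.mpr ⟨⟨i, hi⟩, Finset.mem_univ _, by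
    rw [hx, valE_zero]
    exact EReal.coe_mul_top_of_neg (by simpa using hik)⟩

lemma exists_zero_weightedVal_eq {N i : ℕ} (hi : i + 1 < N) (t : ℝ) :
    ∃ x : Fin N → Nov, x ⟨i, by omega⟩ = 0 ∧ (∀ j, x j = 0 → (j : ℕ) = i) ∧
      weightedVal x i = t := by
  refine ⟨Function.update (Function.update 1 ⟨i + 1, hi⟩ (HahnSeries.single t 1)) ⟨i, by omega⟩ 0,
    Function.update_self .., fun j hj => ?_, ?_⟩
  · by_contra hji
    rw [Function.update_of_ne fun h => hji (by rw [h])] at hj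
    by_cases hj1 : j = ⟨i + 1, hi⟩
    · rw [hj1, Function.update_self] at hj
      exact HahnSeries.single_ne_zero one_ne_zero hj
    · rw [Function.update_of_ne hj1] at hj
      exact one_ne_zero hj
  · rw [weightedVal, Finset.sum_eq_single ⟨i + 1, hi⟩]
    · rw [Function.update_of_ne (by simp), Function.update_self,
        valE_of_ne_zero (HahnSeries.single_ne_zero one_ne_zero),
        HahnSeries.order_single one_ne_zero]
      norm_num
    · intro j _ hj1
      by_cases hji : j = ⟨i, by omega⟩
      · simp [hji]
      · rw [Function.update_of_ne hji, Function.update_of_ne hj1, Pi.one_apply,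
          valE_of_ne_zero one_ne_zero, HahnSeries.order_one, EReal.coe_zero, mul_zero]
    · simp

/-- `(ψ_0 0, …, ψ_{i-1} 0, t, ψ_i 0, …, ψ_n 0, 0)`, a point of the broken line `γ(0, ·)`. -/
noncomputable def brokenLinePoint {n : ℕ} (ψ : Fin (n+1) → ℝ → ℝ) (i : Fin (n+2)) (t : ℝ) :
    Fin (n+3) → EReal :=
  fun m => (((Fin.snoc (Fin.insertNth i t fun j => ψ j 0) 0 : Fin (n+3) → ℝ) m : ℝ) : EReal)

section FmapE

variable {n : ℕ} {ψ : Fin (n+1) → ℝ → ℝ} {x : Fin (n+2) → Nov}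

lemma FmapE_neg_one_last : FmapE n ψ x (-1) (Fin.last _) = 0 := by
  simp [FmapE, valE_neg_one]

variable (hψ : Monotone fun j => ψ j 0)
include hψ

lemma pairwise_le_ofFn_coe : (List.ofFn fun j => ((ψ j 0 : ℝ) : EReal)).Pairwise (· ≤ ·) :=
  (Monotone.sortedLE_ofFn (EReal.coe_strictMono.monotone.comp hψ)).pairwise

lemma FmapE_neg_one_castSucc (m : Fin (n+2)) :
    FmapE n ψ x (-1) m.castSucc = ((List.ofFn fun j => ((ψ j 0 : ℝ) : EReal)).orderedInsert
      (· ≤ ·) (weightedVal x m)).getD m ⊤ := by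
  have hlen : (m : ℕ) < ((List.ofFn fun j => ((ψ j 0 : ℝ) : EReal)).orderedInsert
      (· ≤ ·) (weightedVal x m)).length := by
    rw [List.orderedInsert_length, List.length_ofFn]
    omega
  rw [FmapE, if_neg (by rw [Fin.val_castSucc]; omega)]
  simp only [valE_neg_one, HahnSeries.order_neg, HahnSeries.order_one, min_self, mul_zero,
    add_zero, Fin.univ_val_map, Fin.val_castSucc]
  change ((weightedVal x m ::ₘ ((List.ofFn _ : List EReal) : Multiset EReal)).sort
    (· ≤ ·)).getD m 0 = _
  rw [Multiset.sort_cons_coe_of_pairwise (pairwise_le_ofFn_coe hψ),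
    List.getD_eq_getElem _ _ hlen, List.getD_eq_getElem _ _ hlen]

lemma FmapE_neg_one_castSucc_castSucc_of_top (j : Fin (n+1)) (h : weightedVal x j = ⊤) :
    FmapE n ψ x (-1) j.castSucc.castSucc = ψ j 0 := by
  rw [FmapE_neg_one_castSucc hψ, Fin.val_castSucc, h,
    (pairwise_le_ofFn_coe hψ).getD_top_orderedInsert_top, List.getD_ofFn]

lemma FmapE_neg_one_castSucc_succ_of_bot (j : Fin (n+1)) (h : weightedVal x (j + 1) = ⊥) :
    FmapE n ψ x (-1) j.succ.castSucc = ψ j 0 := by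
  rw [FmapE_neg_one_castSucc hψ, Fin.val_succ, h, List.orderedInsert_bot, List.getD_cons_succ,
    List.getD_ofFn]

lemma FmapE_neg_one_eq_max_min {k : ℕ} (hk : k < n) :
    FmapE n ψ x (-1) ⟨k + 1, by omega⟩ = max ((ψ ⟨k, by omega⟩ 0 : ℝ) : EReal)
      (min (weightedVal x (k + 1)) ((ψ ⟨k + 1, by omega⟩ 0 : ℝ) : EReal)) := by
  have h := FmapE_neg_one_castSucc (x := x) hψ ⟨k + 1, by omega⟩
  rwa [Fin.castSucc_mk, Fin.val_mk, (pairwise_le_ofFn_coe hψ).getD_top_orderedInsert_succ,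
    List.getD_ofFn _ ⟨k, by omega⟩, List.getD_ofFn _ ⟨k + 1, by omega⟩] at h

lemma FmapE_neg_one_eq_brokenLinePoint {k : ℕ} (hk : k < n) (hx : x ⟨k + 1, by omega⟩ = 0)
    (hzero : ∀ j, x j = 0 → k ≤ (j : ℕ)) {t : ℝ}
    (ht : max ((ψ ⟨k, by omega⟩ 0 : ℝ) : EReal)
      (min (weightedVal x (k + 1)) ((ψ ⟨k + 1, by omega⟩ 0 : ℝ) : EReal)) = t) :
    FmapE n ψ x (-1) = brokenLinePoint ψ ⟨k + 1, by omega⟩ t := by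
  funext m
  induction m using Fin.lastCases with
  | last => rw [brokenLinePoint, Fin.snoc_last, FmapE_neg_one_last, EReal.coe_zero]
  | cast m =>
    rw [brokenLinePoint, Fin.snoc_castSucc]
    rcases Fin.eq_self_or_eq_succAbove ⟨k + 1, by omega⟩ m with rfl | ⟨j, rfl⟩
    · rw [Fin.insertNth_apply_same, ← ht]
      exact FmapE_neg_one_eq_max_min hψ hk
    rw [Fin.insertNth_apply_succAbove]
    rcases lt_or_ge (j : ℕ) (k + 1) with hj | hj
    · rw [Fin.succAbove_of_castSucc_lt _ _ hj]
      exact FmapE_neg_one_castSucc_castSucc_of_top hψ j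
        (weightedVal_eq_top _ hx hj fun l hl => (Nat.le_of_lt_succ hj).trans (hzero l hl))
    · rw [Fin.succAbove_of_le_castSucc _ _ hj]
      exact FmapE_neg_one_castSucc_succ_of_bot hψ j
        (weightedVal_eq_bot _ hx (by simp at hj ⊢; omega))

lemma exists_FmapE_neg_one_eq_brokenLinePoint {k : ℕ} (hk : k < n)
    (hx : x ⟨k + 1, by omega⟩ = 0) (hzero : ∀ j, x j = 0 → k ≤ (j : ℕ)) :
    ∃ t : ℝ, ψ ⟨k, by omega⟩ 0 ≤ t ∧ t ≤ ψ ⟨k + 1, by omega⟩ 0 ∧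
      FmapE n ψ x (-1) = brokenLinePoint ψ ⟨k + 1, by omega⟩ t := by
  obtain ⟨t, ht1, ht2, ht⟩ := EReal.exists_coe_eq_max_min
    (hψ (Fin.mk_le_mk.mpr k.le_succ)) (weightedVal x (k + 1))
  exact ⟨t, ht1, ht2, FmapE_neg_one_eq_brokenLinePoint hψ hk hx hzero ht⟩

lemma exists_zero_FmapE_neg_one_eq_brokenLinePoint {k : ℕ} (hk : k < n) {t : ℝ}
    (ht1 : ψ ⟨k, by omega⟩ 0 ≤ t) (ht2 : t ≤ ψ ⟨k + 1, by omega⟩ 0) :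
    ∃ x : Fin (n+2) → Nov, x ⟨k + 1, by omega⟩ = 0 ∧ (∀ j, x j = 0 → (j : ℕ) = k + 1) ∧
      FmapE n ψ x (-1) = brokenLinePoint ψ ⟨k + 1, by omega⟩ t := by
  obtain ⟨x, hx, hzero, hxt⟩ := exists_zero_weightedVal_eq (N := n + 2) (i := k + 1) (by omega) t
  refine ⟨x, hx, hzero, FmapE_neg_one_eq_brokenLinePoint hψ hk hx
    (fun j hj => by rw [hzero j hj]; omega) ?_⟩
  rw [hxt, min_eq_left (EReal.coe_le_coe_iff.mpr ht2), max_eq_right (EReal.coe_le_coe_iff.mpr ht1)]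

end FmapE

/-- On the `i`-th compact toric divisor
`D_i = {(x,y) : x_i = 0, ∏_j x_j = 1 + y, no two vanishing coordinates at distance ≥ 2}`
one has `y = −1` and `val y = 0`, every component of `F` is real-valued, and the image
`F(D_i)` is the segment `{(ψ 0 0, …, ψ (i−1) 0, t, ψ i 0, …, ψ n 0, 0) :
ψ (i−1) 0 ≤ t ≤ ψ i 0}` of the broken line `γ(0, ·)` joining the consecutive corner
points `A (i−1) 0` and `A i 0`. -/
theorem FmapE_image_divisor (n : ℕ) (ψ : Fin (n+1) → ℝ → ℝ)
    (hord : ∀ s : ℝ, StrictMono fun j => ψ j s)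
    (i : ℕ) (hi1 : 1 ≤ i) (hi2 : i ≤ n)
    (D : Set ((Fin (n+2) → Nov) × Nov))
    (hD : D = {p | p.1 ⟨i, by omega⟩ = 0 ∧ (∏ j, p.1 j) = 1 + p.2 ∧
        ¬ ∃ q q' : Fin (n+2), p.1 q = 0 ∧ p.1 q' = 0 ∧
          ((q:ℕ) + 2 ≤ (q':ℕ) ∨ (q':ℕ) + 2 ≤ (q:ℕ))}) :
    (∀ p ∈ D, p.2 = -1 ∧ valE p.2 = 0) ∧
    (∀ p ∈ D, ∀ k : Fin (n+3), ∃ t : ℝ, FmapE n ψ p.1 p.2 k = (t : EReal)) ∧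
    (fun p : (Fin (n+2) → Nov) × Nov => FmapE n ψ p.1 p.2) '' D
      = {q : Fin (n+3) → EReal | ∃ t : ℝ,
          ψ ⟨i-1, by omega⟩ 0 ≤ t ∧ t ≤ ψ ⟨i, by omega⟩ 0 ∧
          q = fun m => (((Fin.snoc
              (Fin.insertNth ⟨i, by omega⟩ t fun j => ψ j 0) 0 : Fin (n+3) → ℝ) m : ℝ)
            : EReal)} := by
  have hψ : Monotone fun j => ψ j 0 := (hord 0).monotone
  have hy : ∀ p ∈ D, p.2 = -1 := fun p hp => by
    rw [hD] at hp
    exact eq_neg_one_of_prod_eq_one_add hp.1 hp.2.1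
  suffices himg : (fun p : (Fin (n+2) → Nov) × Nov => FmapE n ψ p.1 p.2) '' D =
      {q | ∃ t : ℝ, ψ ⟨i-1, by omega⟩ 0 ≤ t ∧ t ≤ ψ ⟨i, by omega⟩ 0 ∧
        q = brokenLinePoint ψ ⟨i, by omega⟩ t} by
    refine ⟨fun p hp => ⟨hy p hp, by rw [hy p hp, valE_neg_one]⟩, fun p hp k => ?_, himg⟩
    obtain ⟨t, -, -, ht⟩ := himg ▸ Set.mem_image_of_mem _ hp
    exact ⟨_, congrFun ht k⟩
  obtain ⟨k, rfl⟩ : ∃ k, i = k + 1 := ⟨i - 1, by omega⟩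
  have hk : k < n := by omega
  ext q
  constructor
  · rintro ⟨⟨x, y⟩, hp, rfl⟩
    obtain rfl := hy _ hp
    rw [hD] at hp
    obtain ⟨hx, -, hfar⟩ := hp
    exact exists_FmapE_neg_one_eq_brokenLinePoint hψ hk hx fun j hj => by
      by_contra
      exact hfar ⟨j, _, hj, hx, by simp only; omega⟩
  · rintro ⟨t, ht1, ht2, rfl⟩
    obtain ⟨x, hx, hzero, hFx⟩ := exists_zero_FmapE_neg_one_eq_brokenLinePoint hψ hk ht1 ht2
    refine ⟨(x, -1), ?_, hFx⟩
    rw [hD]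
    refine ⟨hx, by rw [Finset.prod_eq_zero (Finset.mem_univ _) hx, add_neg_cancel], ?_⟩
    rintro ⟨q, q', hq, hq', hd⟩
    have := hzero q hq
    have := hzero q' hq'
    omega
end

section
/- Assume in addition that ψ_j(s) > 0 for every s ∈ ℝ and every 0 ≤ j ≤ n. Then for every pair (x, y) with x ∈ (Λ^×)^(n+2), y ∈ Λ^× and ∏_{j=0}^{n+1} x_j = 1 + y, one has F(x,y) ∈ {γ(s,c) : s ∈ ℝ, c > 0} if and only if Σ_{j=0}^{n+1} j·val(x_j) > 0, i.e. if and only if the non-archimedean norm of ∏_{j=0}^{n+1} x_j^j is strictly less than 1. -/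
/-- The additive valuation `val : Λ → ℝ` (the order of a nonzero Hahn series;
junk value at `0`). -/
noncomputable def val (x : Nov) : ℝ := x.order

/-- The tropically continuous fibration `F` in homogeneous coordinates:
`F_k(x,y) = {Σ_j (j−k)·val(x_j) + k·min(0, val y), ψ 0 (val y), …, ψ n (val y)}_[k]`
for `0 ≤ k ≤ n+1`, and last component `val y`. -/
noncomputable def Fmap (n : ℕ) (ψ : Fin (n+1) → ℝ → ℝ)
    (x : Fin (n+2) → Nov) (y : Nov) : Fin (n+3) → ℝ :=
  fun i => if (i : ℕ) = n + 2 then val y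
    else orderStat
      (((∑ j : Fin (n+2), (((j:ℕ):ℝ) - ((i:ℕ):ℝ)) * val (x j))
          + ((i:ℕ):ℝ) * min 0 (val y))
        ::ₘ Finset.univ.val.map (fun j => ψ j (val y))) (i : ℕ)

theorem List.Pairwise.getElem?_orderedInsert_of_le {α : Type*} [LinearOrder α] {l : List α}
    (hl : l.Pairwise (· ≤ ·)) {a b : α} {k : ℕ} (hb : l[k]? = some b) (h : b ≤ a) :
    (l.orderedInsert (· ≤ ·) a)[k]? = some b := by
  induction l generalizing k with
  | nil => simp at hb
  | cons c l ih =>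
    by_cases hac : a ≤ c
    -- `a` goes to the front; then `c ≤ b ≤ a ≤ c`, so the entries up to index `k` all equal `b`
    · simp only [List.orderedInsert_cons, if_pos hac]
      obtain ⟨hk, rfl⟩ := List.getElem?_eq_some_iff.1 hb
      rcases k with _ | k
      · simp only [List.getElem_cons_zero] at h
        simp [le_antisymm hac h]
      · have hle_next := hl.sortedLE.getElem_le_getElem_of_le (hi := Nat.lt_of_succ_lt hk)
          (hj := hk) (Nat.le_succ k)
        have hhead_le := hl.sortedLE.getElem_le_getElem_of_le (hi := Nat.zero_lt_of_lt hk)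
          (hj := Nat.lt_of_succ_lt hk) (Nat.zero_le k)
        simp only [List.getElem?_cons_succ, List.getElem?_eq_getElem (Nat.lt_of_succ_lt hk)]
        simp only [List.getElem_cons_zero] at hhead_le
        exact congrArg some (le_antisymm hle_next (h.trans (hac.trans hhead_le)))
    · simp only [List.orderedInsert_cons, if_neg hac]
      rcases k with _ | k
      · simpa using hb
      · simpa using ih (List.pairwise_cons.1 hl).2 (by simpa using hb)

theorem List.Pairwise.getElem?_orderedInsert_succ_of_ge {α : Type*} [LinearOrder α] {l : List α}
    (hl : l.Pairwise (· ≤ ·)) {a b : α} {k : ℕ} (hb : l[k]? = some b) (h : a ≤ b) :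
    (l.orderedInsert (· ≤ ·) a)[k + 1]? = some b := by
  induction l generalizing k with
  | nil => simp at hb
  | cons c l ih =>
    by_cases hac : a ≤ c
    · simpa [List.orderedInsert_cons, if_pos hac] using hb
    · simp only [List.orderedInsert_cons, if_neg hac]
      rcases k with _ | k
      · simp only [List.getElem?_cons_zero, Option.some.injEq] at hb
        exact absurd (hb ▸ h) hac
      · simpa using ih (List.pairwise_cons.1 hl).2 (by simpa using hb)

theorem Multiset.sort_cons_eq_orderedInsert_s13 {α : Type*} [LinearOrder α] (a : α)
    (s : Multiset α) :
    (a ::ₘ s).sort (· ≤ ·) = (s.sort (· ≤ ·)).orderedInsert (· ≤ ·) a := by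
  conv_lhs => rw [← Multiset.sort_eq s (· ≤ ·)]
  rw [Multiset.cons_coe, Multiset.coe_sort, List.mergeSort_eq_insertionSort,
    List.insertionSort_cons, (Multiset.pairwise_sort s _).insertionSort_eq]

section OrderStat

variable {s : Multiset ℝ} {a : ℝ} {i j k : ℕ}

theorem getElem?_sort_eq_orderStat (hk : k < Multiset.card s) :
    (s.sort (· ≤ ·))[k]? = some (orderStat s k) := by
  rw [orderStat, List.getD_eq_getElem?_getD, List.getElem?_eq_getElem (by simpa using hk)]
  rfl

theorem orderStat_mem (hk : k < Multiset.card s) : orderStat s k ∈ s :=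
  (Multiset.mem_sort (· ≤ ·)).1 (List.mem_of_getElem? (getElem?_sort_eq_orderStat hk))

theorem orderStat_mono (hij : i ≤ j) (hj : j < Multiset.card s) :
    orderStat s i ≤ orderStat s j := by
  have hj' : j < (s.sort (· ≤ ·)).length := by simpa using hj
  simp only [orderStat, List.getD_eq_getElem?_getD, List.getElem?_eq_getElem hj',
    List.getElem?_eq_getElem (hij.trans_lt hj'), Option.getD_some]
  exact (Multiset.pairwise_sort s _).sortedLE.getElem_le_getElem_of_le hij

theorem orderStat_zero_le (ha : a ∈ s) : orderStat s 0 ≤ a := by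
  obtain ⟨i, hi, rfl⟩ := List.getElem_of_mem ((Multiset.mem_sort (· ≤ ·)).2 ha)
  have hsi : orderStat s i = (s.sort (· ≤ ·))[i] := by
    rw [orderStat, List.getD_eq_getElem?_getD, List.getElem?_eq_getElem hi, Option.getD_some]
  exact hsi ▸ orderStat_mono (Nat.zero_le i) (by simpa using hi)

theorem orderStat_cons_of_le_s13 (hk : k < Multiset.card s) (h : orderStat s k ≤ a) :
    orderStat (a ::ₘ s) k = orderStat s k := by
  rw [orderStat, Multiset.sort_cons_eq_orderedInsert_s13, List.getD_eq_getElem?_getD,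
    (Multiset.pairwise_sort s _).getElem?_orderedInsert_of_le (getElem?_sort_eq_orderStat hk) h]
  rfl

theorem orderStat_cons_succ_of_ge_s13 (hk : k < Multiset.card s) (h : a ≤ orderStat s k) :
    orderStat (a ::ₘ s) (k + 1) = orderStat s k := by
  rw [orderStat, Multiset.sort_cons_eq_orderedInsert_s13, List.getD_eq_getElem?_getD,
    (Multiset.pairwise_sort s _).getElem?_orderedInsert_succ_of_ge
      (getElem?_sort_eq_orderStat hk) h]
  rfl

end OrderStat

theorem Nat.exists_le_and_not_succ {P : ℕ → Prop} (h0 : P 0) (N : ℕ) :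
    ∃ k ≤ N, P k ∧ (k < N → ¬P (k + 1)) := by
  classical
  exact ⟨Nat.findGreatest P N, Nat.findGreatest_le N, Nat.findGreatest_spec (Nat.zero_le N) h0,
    fun h => Nat.findGreatest_is_greatest (lt_add_one _) h⟩

theorem exists_orderStat_cons_eq_orderStat_cons (s : Multiset ℝ) {b : ℝ}
    (hs : ∀ a ∈ s, b < a) {t : ℕ → ℝ} (ht : Antitone t) (hb : b < t 0) :
    ∃ c, b < c ∧
      ∀ k ≤ Multiset.card s, orderStat (t k ::ₘ s) k = orderStat (c ::ₘ s) k := by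
  set N := Multiset.card s
  obtain ⟨k₀, hk₀N, hk₀, hk₀succ⟩ :=
    Nat.exists_le_and_not_succ (P := fun k => k = 0 ∨ orderStat s (k - 1) < t k) (Or.inl rfl) N
  replace hk₀ (h : 0 < k₀) : orderStat s (k₀ - 1) < t k₀ := hk₀.resolve_left h.ne'
  replace hk₀succ (h : k₀ < N) : t (k₀ + 1) ≤ orderStat s k₀ := by
    simpa using hk₀succ h
  have hbt : b < t k₀ := by
    rcases Nat.eq_zero_or_pos k₀ with h | h
    · exact h ▸ hb
    · exact (hs _ (orderStat_mem (by omega))).trans (hk₀ h)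
  let c := if k₀ < N then min (t k₀) (orderStat s k₀) else t k₀
  have hc_le_t : c ≤ t k₀ := by by_cases h : k₀ < N <;> simp [c, h]
  have hc_le (h : k₀ < N) : c ≤ orderStat s k₀ := by simp only [c, if_pos h, min_le_right]
  have hc_ge {u : ℝ} (hu : u ≤ t k₀) (hu' : k₀ < N → u ≤ orderStat s k₀) :
      u ≤ c := by
    by_cases h : k₀ < N
    · simpa only [c, if_pos h, le_min_iff] using ⟨hu, hu' h⟩
    · simpa only [c, if_neg h] using hu
  refine ⟨c, ?_, fun k hk => ?_⟩
  · by_cases h : k₀ < N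
    · simpa only [c, if_pos h, lt_min_iff] using ⟨hbt, hs _ (orderStat_mem h)⟩
    · simpa only [c, if_neg h] using hbt
  -- below `k₀` both sides are `orderStat s k`, above it both are `orderStat s (k - 1)`
  rcases lt_trichotomy k k₀ with hlt | rfl | hgt
  · have htk₀ : orderStat s k ≤ t k₀ :=
      (orderStat_mono (by omega) (by omega)).trans (hk₀ (by omega)).le
    rw [orderStat_cons_of_le_s13 (by omega) (htk₀.trans (ht hlt.le)),
      orderStat_cons_of_le_s13 (by omega) (hc_ge htk₀ (orderStat_mono hlt.le))]
  · by_cases h : k < N ∧ orderStat s k ≤ t k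
    · rw [orderStat_cons_of_le_s13 h.1 h.2, orderStat_cons_of_le_s13 h.1 (hc_ge h.2 fun _ => le_rfl)]
    · have hc : c = t k :=
        le_antisymm hc_le_t (hc_ge le_rfl fun hN => (not_le.1 fun h' => h ⟨hN, h'⟩).le)
      rw [hc]
  · obtain ⟨j, rfl⟩ : ∃ j, k = j + 1 := ⟨k - 1, by omega⟩
    have hk₀j : k₀ < N := by omega
    rw [orderStat_cons_succ_of_ge_s13 (by omega)
        ((ht hgt).trans ((hk₀succ hk₀j).trans (orderStat_mono (by omega) (by omega)))),
      orderStat_cons_succ_of_ge_s13 (by omega)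
        ((hc_le hk₀j).trans (orderStat_mono (by omega) (by omega)))]

theorem val_prod {ι : Type*} (s : Finset ι) {f : ι → Nov} (hf : ∀ i ∈ s, f i ≠ 0) :
    val (∏ i ∈ s, f i) = ∑ i ∈ s, val (f i) := by
  classical
  induction s using Finset.induction_on with
  | empty => simp [val]
  | insert a s ha ih =>
    have hs : ∀ i ∈ s, f i ≠ 0 := fun i hi => hf i (Finset.mem_insert_of_mem hi)
    rw [Finset.prod_insert ha, Finset.sum_insert ha, ← ih hs]
    exact HahnSeries.order_mul (hf a (Finset.mem_insert_self a s)) (Finset.prod_ne_zero_iff.2 hs)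

theorem val_pow (x : Nov) (k : ℕ) : val (x ^ k) = k * val x := by
  simp [val, HahnSeries.order_pow]

theorem min_zero_val_le_val_one_add (y : Nov) : min 0 (val y) ≤ val (1 + y) := by
  by_cases h : 1 + y = 0
  · simp [h, val]
  · simpa [val] using HahnSeries.min_order_le_order_add h

section Fmap

variable {n : ℕ} {ψ : Fin (n+1) → ℝ → ℝ} {x : Fin (n+2) → Nov} {y : Nov}

theorem Fmap_apply_of_ne {i : Fin (n+3)} (hi : (i : ℕ) ≠ n + 2) :
    Fmap n ψ x y i =
      orderStat ((∑ j : Fin (n+2), ((j : ℕ) : ℝ) * val (x j)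
        - (i : ℕ) * (∑ j, val (x j) - min 0 (val y))) ::ₘ
        Finset.univ.val.map fun j => ψ j (val y)) i := by
  simp only [Fmap, if_neg hi, sub_mul, Finset.sum_sub_distrib, ← Finset.mul_sum]
  congr 2
  ring

theorem gammaMap_apply_of_ne {s c : ℝ} {i : Fin (n+3)} (hi : (i : ℕ) ≠ n + 2) :
    gammaMap n ψ (s, c) i = orderStat (c ::ₘ Finset.univ.val.map fun j => ψ j s) i :=
  if_neg hi

theorem pos_of_Fmap_eq_gammaMap (hpos : ∀ s j, 0 < ψ j s) {s c : ℝ} (hc : 0 < c)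
    (h : Fmap n ψ x y = gammaMap n ψ (s, c)) :
    0 < ∑ j : Fin (n+2), ((j : ℕ) : ℝ) * val (x j) := by
  have h0 := congrFun h 0
  rw [Fmap_apply_of_ne (by simp), gammaMap_apply_of_ne (by simp)] at h0
  simp only [Fin.val_zero, Nat.cast_zero, zero_mul, sub_zero] at h0
  calc 0 < orderStat (c ::ₘ Finset.univ.val.map fun j => ψ j s) 0 :=
        Multiset.forall_mem_cons.2 ⟨hc, Multiset.forall_mem_map_iff.2 fun j _ => hpos s j⟩ _
          (orderStat_mem (k := 0) (by simp))
    _ = _ := h0.symm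
    _ ≤ _ := orderStat_zero_le (Multiset.mem_cons_self _ _)

theorem exists_Fmap_eq_gammaMap (hpos : ∀ s j, 0 < ψ j s)
    (hm : min 0 (val y) ≤ ∑ j, val (x j))
    (hA : 0 < ∑ j : Fin (n+2), ((j : ℕ) : ℝ) * val (x j)) :
    ∃ c, 0 < c ∧ Fmap n ψ x y = gammaMap n ψ (val y, c) := by
  let t : ℕ → ℝ := fun k =>
    ∑ j : Fin (n+2), ((j : ℕ) : ℝ) * val (x j) - k * (∑ j, val (x j) - min 0 (val y))
  have ht : Antitone t := fun a b hab =>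
    sub_le_sub_left (mul_le_mul_of_nonneg_right (Nat.cast_le.2 hab) (sub_nonneg.2 hm)) _
  obtain ⟨c, hc, hceq⟩ := exists_orderStat_cons_eq_orderStat_cons _
    (Multiset.forall_mem_map_iff.2 fun j _ => hpos (val y) j) ht (by simpa [t] using hA)
  refine ⟨c, hc, funext fun i => ?_⟩
  by_cases hi : (i : ℕ) = n + 2
  · simp [Fmap, gammaMap, hi]
  · rw [Fmap_apply_of_ne hi, gammaMap_apply_of_ne hi]
    exact hceq i (by simp; omega)

end Fmap

theorem Fmap_mem_iff_norm_lt_one_general (n : ℕ) (ψ : Fin (n+1) → ℝ → ℝ)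
    (hpos : ∀ (s : ℝ) (j : Fin (n+1)), 0 < ψ j s)
    (x : Fin (n+2) → Nov) (y : Nov)
    (hx : ∀ j, x j ≠ 0) (hprod : (∏ j, x j) = 1 + y) :
    (Fmap n ψ x y ∈ {p : Fin (n+3) → ℝ | ∃ s c : ℝ, 0 < c ∧ p = gammaMap n ψ (s, c)}
      ↔ 0 < ∑ j : Fin (n+2), ((j:ℕ):ℝ) * val (x j)) ∧
    (Fmap n ψ x y ∈ {p : Fin (n+3) → ℝ | ∃ s c : ℝ, 0 < c ∧ p = gammaMap n ψ (s, c)}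
      ↔ 0 < val (∏ j : Fin (n+2), (x j) ^ (j:ℕ))) := by
  have hm : min 0 (val y) ≤ ∑ j, val (x j) := by
    rw [← val_prod _ fun j _ => hx j, hprod]
    exact min_zero_val_le_val_one_add y
  have key : Fmap n ψ x y ∈ {p | ∃ s c : ℝ, 0 < c ∧ p = gammaMap n ψ (s, c)} ↔
      0 < ∑ j : Fin (n+2), ((j:ℕ):ℝ) * val (x j) := by
    refine ⟨fun ⟨_, _, hc, h⟩ => pos_of_Fmap_eq_gammaMap hpos hc h, fun hA => ?_⟩
    obtain ⟨c, hc, h⟩ := exists_Fmap_eq_gammaMap hpos hm hA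
    exact ⟨val y, c, hc, h⟩
  refine ⟨key, key.trans ?_⟩
  rw [val_prod _ fun j _ => pow_ne_zero _ (hx j)]
  simp only [val_pow]

/-- If moreover `ψ j s > 0` for all `j` and `s`, then for every `(x,y)`
with all `x j` and `y` nonzero and `∏_j x_j = 1 + y`, the point `F(x,y)` lies in
`{γ(s,c) : s ∈ ℝ, c > 0}` if and only if `Σ_j j·val(x_j) > 0`, i.e. if and only if the
non-archimedean norm of `∏_j x_j^j` is strictly less than `1` (equivalently, its
valuation is positive). -/
theorem Fmap_mem_iff_norm_lt_one (n : ℕ) (ψ : Fin (n+1) → ℝ → ℝ)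
    (hord : ∀ s : ℝ, StrictMono fun j => ψ j s)
    (hpos : ∀ (s : ℝ) (j : Fin (n+1)), 0 < ψ j s)
    (x : Fin (n+2) → Nov) (y : Nov)
    (hx : ∀ j, x j ≠ 0) (hy : y ≠ 0) (hprod : (∏ j, x j) = 1 + y) :
    (Fmap n ψ x y ∈ {p : Fin (n+3) → ℝ | ∃ s c : ℝ, 0 < c ∧ p = gammaMap n ψ (s, c)}
      ↔ 0 < ∑ j : Fin (n+2), ((j:ℕ):ℝ) * val (x j)) ∧
    (Fmap n ψ x y ∈ {p : Fin (n+3) → ℝ | ∃ s c : ℝ, 0 < c ∧ p = gammaMap n ψ (s, c)}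
      ↔ 0 < val (∏ j : Fin (n+2), (x j) ^ (j:ℕ))) :=
  Fmap_mem_iff_norm_lt_one_general n ψ hpos x y hx hprod
end

section
/- Let ψ : ℝ → ℝ and take all the functions in the definition of F to be equal: ψ_0 = ψ_1 = ⋯ = ψ_n = ψ. Then for every pair (x, y) with x ∈ (Λ^×)^(n+2), y ∈ Λ^× and ∏_{j=0}^{n+1} x_j = 1 + y: F_0(x,y) = min( Σ_{j=0}^{n+1} j·val(x_j), ψ(val(y)) ); F_k(x,y) = ψ(val(y)) for every 1 ≤ k ≤ n; and F_{n+1}(x,y) = max( Σ_{j=0}^{n+1} (j−n−1)·val(x_j) + (n+1)·min(0, val(y)), ψ(val(y)) ). -/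
/-!
When all `ψ_j` equal `ψ`, the multiset defining `F_k` consists of one value `a` and `n + 1`
copies of `c = ψ (val y)`. Its sorted list is `a` followed by the copies when `a ≤ c`, and the
copies followed by `a` otherwise, so entry `0` is `min a c`, entry `n + 1` is `max a c`, and
every entry in between is `c`.
-/

theorem Multiset.sort_cons_replicate {α : Type*} [LinearOrder α] (a c : α) (m : ℕ) :
    (a ::ₘ Multiset.replicate m c).sort (· ≤ ·) =
      if a ≤ c then a :: List.replicate m c else List.replicate m c ++ [a] := by
  split_ifs with h
  · rw [← Multiset.coe_replicate, Multiset.cons_coe, Multiset.coe_sort]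
    refine List.mergeSort_eq_self _ (List.pairwise_cons.mpr ⟨?_, ?_⟩)
    · simp [List.mem_replicate, h]
    · simp [List.pairwise_replicate]
  · have hperm : a ::ₘ Multiset.replicate m c = ↑(List.replicate m c ++ [a]) := by
      rw [← Multiset.coe_add, Multiset.coe_replicate, Multiset.coe_singleton,
        add_comm, Multiset.singleton_add]
    rw [hperm, Multiset.coe_sort]
    refine List.mergeSort_eq_self _ (List.pairwise_append.mpr ⟨?_, by simp, ?_⟩)
    · simp [List.pairwise_replicate]
    · simp [List.mem_replicate, (not_le.mp h).le]

section OrderStatConsReplicate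

variable (a c : ℝ) {m : ℕ}

theorem orderStat_cons_replicate_zero (hm : 0 < m) :
    orderStat (a ::ₘ Multiset.replicate m c) 0 = min a c := by
  rw [orderStat, Multiset.sort_cons_replicate]
  split_ifs with h
  · simp [h]
  · rw [List.getD_append _ _ _ _ (by simpa using hm), List.getD_replicate (h := hm),
      min_eq_right (not_le.mp h).le]

theorem orderStat_cons_replicate_of_lt {k : ℕ} (hk : 0 < k) (hkm : k < m) :
    orderStat (a ::ₘ Multiset.replicate m c) k = c := by
  obtain ⟨k, rfl⟩ := Nat.exists_eq_succ_of_ne_zero hk.ne'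
  rw [orderStat, Multiset.sort_cons_replicate]
  split_ifs
  · rw [List.getD_cons_succ, List.getD_replicate (h := by omega)]
  · rw [List.getD_append _ _ _ _ (by simpa using hkm), List.getD_replicate (h := hkm)]

theorem orderStat_cons_replicate_self (hm : 0 < m) :
    orderStat (a ::ₘ Multiset.replicate m c) m = max a c := by
  obtain ⟨m, rfl⟩ := Nat.exists_eq_succ_of_ne_zero hm.ne'
  rw [orderStat, Multiset.sort_cons_replicate]
  split_ifs with h
  · rw [List.getD_cons_succ, List.getD_replicate (h := by omega), max_eq_right h]
  · rw [List.getD_append_right _ _ _ _ (by simp)]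
    simp [(not_le.mp h).le]

end OrderStatConsReplicate

theorem Fmap_const_apply_of_ne (n : ℕ) (ψ : ℝ → ℝ) (x : Fin (n+2) → Nov) (y : Nov)
    (i : Fin (n+3)) (hi : (i : ℕ) ≠ n + 2) :
    Fmap n (fun _ => ψ) x y i =
      orderStat (((∑ j : Fin (n+2), (((j:ℕ):ℝ) - ((i:ℕ):ℝ)) * val (x j))
          + ((i:ℕ):ℝ) * min 0 (val y)) ::ₘ Multiset.replicate (n+1) (ψ (val y))) i := by
  rw [Fmap, if_neg hi, Multiset.map_const', Finset.card_val, Finset.card_univ, Fintype.card_fin]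

/-- When all the functions `ψ_j` coincide with a single `ψ : ℝ → ℝ`
(the collision of all singular fibers), the order statistics degenerate: for every `(x,y)`
with all `x j` and `y` nonzero and `∏_j x_j = 1 + y`,
`F_0 = min(Σ_j j·val(x_j), ψ(val y))`, `F_k = ψ(val y)` for `1 ≤ k ≤ n`, and
`F_{n+1} = max(Σ_j (j−n−1)·val(x_j) + (n+1)·min(0, val y), ψ(val y))`. -/
theorem Fmap_degenerate (n : ℕ) (ψ : ℝ → ℝ)
    (x : Fin (n+2) → Nov) (y : Nov) :
    Fmap n (fun _ => ψ) x y ⟨0, by omega⟩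
      = min (∑ j : Fin (n+2), ((j:ℕ):ℝ) * val (x j)) (ψ (val y)) ∧
    (∀ k : Fin (n+1), 1 ≤ (k:ℕ) →
      Fmap n (fun _ => ψ) x y ⟨(k:ℕ), by omega⟩ = ψ (val y)) ∧
    Fmap n (fun _ => ψ) x y ⟨n+1, by omega⟩
      = max ((∑ j : Fin (n+2), (((j:ℕ):ℝ) - ((n:ℝ) + 1)) * val (x j))
          + ((n:ℝ) + 1) * min 0 (val y)) (ψ (val y)) := by
  refine ⟨?_, fun k hk => ?_, ?_⟩
  · rw [Fmap_const_apply_of_ne _ _ _ _ _ (by simp), orderStat_cons_replicate_zero _ _ n.succ_pos]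
    simp
  · rw [Fmap_const_apply_of_ne _ _ _ _ _ (show (k : ℕ) ≠ n + 2 by omega),
      orderStat_cons_replicate_of_lt _ _ hk (by omega)]
  · rw [Fmap_const_apply_of_ne _ _ _ _ _ (by simp), orderStat_cons_replicate_self _ _ n.succ_pos]
    push_cast
    rfl
end

section
/- Let a_0, …, a_n ∈ ℂ be pairwise distinct, let 0 ≤ k ≤ n+1 and let r > 0 satisfy |a_i| < r for every 0 ≤ i ≤ k−1 and |a_i| > r for every k ≤ i ≤ n. Let I ⊆ {0, …, k−1} and suppose g is a holomorphic disk component with g(ζ)² = ∏_{i=0}^{k−1} (r − conj(a_i)·ζ) · ∏_{i=k}^{n} (r·ζ − a_i) for all ζ ∈ 𝔻. Then each factor r − conj(a_i)·ζ (0 ≤ i ≤ k−1) is nonvanishing on 𝔻, and the functions 𝔲(ζ) := g(ζ)·∏_{i∈I} (rζ − a_i)/(r − conj(a_i)ζ), 𝔳(ζ) := g(ζ)·∏_{i∈{0,…,k−1}∖I} (rζ − a_i)/(r − conj(a_i)ζ), 𝔷(ζ) := rζ are holomorphic disk components satisfying: 𝔲(ζ)·𝔳(ζ) = ∏_{i=0}^{n}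 (rζ − a_i) = h(𝔷(ζ)) for all ζ ∈ 𝔻, where h(z) := ∏_{i=0}^{n} (z − a_i); and |𝔲(ζ)| = |𝔳(ζ)| and |𝔷(ζ)| = r for every ζ with |ζ| = 1. In particular ζ ↦ (𝔲(ζ), 𝔳(ζ), 𝔷(ζ)) maps 𝔻 into X̄ = {uv = h(z)} with boundary in the fiber L_{(0,r)} = {(u,v,z) ∈ X̄ : |u| = |v|, |z| = r}. -/
open Complex ComplexConjugate Finset Metric

namespace IsHolomorphicDiskComponent

theorem of_differentiableOn {f : ℂ → ℂ} (hf : DifferentiableOn ℂ f (closedBall 0 1)) :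
    IsHolomorphicDiskComponent f :=
  ⟨hf.continuousOn, hf.mono ball_subset_closedBall⟩

theorem mul {f g : ℂ → ℂ} (hf : IsHolomorphicDiskComponent f)
    (hg : IsHolomorphicDiskComponent g) : IsHolomorphicDiskComponent fun ζ => f ζ * g ζ :=
  ⟨hf.1.mul hg.1, hf.2.mul hg.2⟩

theorem finset_prod {ι : Type*} {s : Finset ι} {f : ι → ℂ → ℂ}
    (hf : ∀ i ∈ s, IsHolomorphicDiskComponent (f i)) :
    IsHolomorphicDiskComponent fun ζ => ∏ i ∈ s, f i ζ :=
  ⟨continuousOn_finsetProd s fun i hi => (hf i hi).1,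
    DifferentiableOn.fun_finsetProd fun i hi => (hf i hi).2⟩

end IsHolomorphicDiskComponent

section BlaschkeFactor

variable {r : ℝ} {b ζ : ℂ}

theorem ofReal_sub_conj_mul_ne_zero (hb : ‖b‖ < r) (hζ : ‖ζ‖ ≤ 1) :
    (r : ℂ) - conj b * ζ ≠ 0 := by
  rw [sub_ne_zero]
  apply_fun (‖·‖)
  refine ne_of_gt ?_
  calc ‖conj b * ζ‖ = ‖b‖ * ‖ζ‖ := by rw [norm_mul, norm_conj]
    _ ≤ ‖b‖ := mul_le_of_le_one_right (norm_nonneg b) hζ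
    _ < r := hb
    _ ≤ ‖(r : ℂ)‖ := by rw [norm_real, Real.norm_eq_abs]; exact le_abs_self r

/-- The Blaschke factor of `b` for the disk of radius `r`, pulled back along `ζ ↦ rζ`. -/
noncomputable def blaschkeFactor (r : ℝ) (b ζ : ℂ) : ℂ :=
  ((r : ℂ) * ζ - b) / ((r : ℂ) - conj b * ζ)

theorem isHolomorphicDiskComponent_blaschkeFactor (hb : ‖b‖ < r) :
    IsHolomorphicDiskComponent (blaschkeFactor r b) := by
  refine .of_differentiableOn (DifferentiableOn.div (by fun_prop) (by fun_prop) fun ζ hζ => ?_)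
  exact ofReal_sub_conj_mul_ne_zero hb (by simpa using hζ)

theorem norm_mul_sub_eq_norm_sub_conj_mul (hζ : ‖ζ‖ = 1) :
    ‖(r : ℂ) * ζ - b‖ = ‖(r : ℂ) - conj b * ζ‖ := by
  have hζζ : ζ * conj ζ = 1 := by
    rw [mul_conj, normSq_eq_norm_sq, hζ]; norm_num
  have hrefl : (r : ℂ) * ζ - b = ζ * conj ((r : ℂ) - conj b * ζ) := by
    simp only [map_sub, map_mul, conj_conj, conj_ofReal]
    linear_combination b * hζζ
  rw [hrefl, norm_mul, hζ, one_mul, norm_conj]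

theorem norm_blaschkeFactor (hb : ‖b‖ < r) (hζ : ‖ζ‖ = 1) : ‖blaschkeFactor r b ζ‖ = 1 := by
  rw [blaschkeFactor, norm_div, norm_mul_sub_eq_norm_sub_conj_mul hζ, div_self]
  exact norm_ne_zero_iff.mpr (ofReal_sub_conj_mul_ne_zero hb hζ.le)

theorem sub_conj_mul_mul_blaschkeFactor (hb : ‖b‖ < r) (hζ : ‖ζ‖ ≤ 1) :
    ((r : ℂ) - conj b * ζ) * blaschkeFactor r b ζ = r * ζ - b :=
  mul_div_cancel₀ _ (ofReal_sub_conj_mul_ne_zero hb hζ)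

end BlaschkeFactor

theorem Finset.prod_ite_mul_prod_filter {ι M : Type*} [Fintype ι] [CommMonoid M]
    (p : ι → Prop) [DecidablePred p] {d n c : ι → M} (hdc : ∀ i, p i → d i * c i = n i) :
    (∏ i, if p i then d i else n i) * ∏ i ∈ univ.filter p, c i = ∏ i, n i := by
  rw [prod_ite, mul_right_comm, ← prod_mul_distrib, prod_congr rfl fun i hi =>
    hdc i (mem_filter.mp hi).2, prod_filter_mul_prod_filter_not]

theorem Finset.prod_mul_prod_filter_and_not_mem {ι M : Type*} [Fintype ι] [DecidableEq ι]
    [CommMonoid M] {p : ι → Prop} [DecidablePred p] {s : Finset ι} (hs : ∀ i ∈ s, p i)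
    (f : ι → M) :
    (∏ i ∈ s, f i) * ∏ i ∈ univ.filter (fun i => p i ∧ i ∉ s), f i =
      ∏ i ∈ univ.filter p, f i := by
  rw [← prod_filter_mul_prod_filter_not (univ.filter p) (· ∈ s), filter_mem_eq_inter,
    inter_eq_right.mpr fun i hi => by simpa using hs i hi, filter_filter]

theorem blaschke_disks_general (n : ℕ) (a : Fin (n+1) → ℂ)
    (k : ℕ) (r : ℝ) (hr : 0 < r)
    (hlt : ∀ i : Fin (n+1), (i:ℕ) < k → ‖a i‖ < r)
    (I : Finset (Fin (n+1))) (hI : ∀ i ∈ I, (i:ℕ) < k)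
    (g : ℂ → ℂ) (hg : IsHolomorphicDiskComponent g)
    (hg2 : ∀ ζ ∈ Metric.closedBall (0:ℂ) 1,
      (g ζ)^2 = ∏ i : Fin (n+1),
        (if (i:ℕ) < k then (r:ℂ) - (starRingEnd ℂ) (a i) * ζ else (r:ℂ) * ζ - a i))
    (u v z : ℂ → ℂ)
    (hu : u = fun ζ => g ζ *
      ∏ i ∈ I, ((r:ℂ) * ζ - a i) / ((r:ℂ) - (starRingEnd ℂ) (a i) * ζ))
    (hv : v = fun ζ => g ζ *
      ∏ i ∈ Finset.univ.filter (fun i : Fin (n+1) => (i:ℕ) < k ∧ i ∉ I),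
        ((r:ℂ) * ζ - a i) / ((r:ℂ) - (starRingEnd ℂ) (a i) * ζ))
    (hz : z = fun ζ => (r:ℂ) * ζ) :
    (∀ i : Fin (n+1), (i:ℕ) < k → ∀ ζ ∈ Metric.closedBall (0:ℂ) 1,
      (r:ℂ) - (starRingEnd ℂ) (a i) * ζ ≠ 0) ∧
    IsHolomorphicDiskComponent u ∧ IsHolomorphicDiskComponent v ∧
    IsHolomorphicDiskComponent z ∧
    (∀ ζ ∈ Metric.closedBall (0:ℂ) 1,
      u ζ * v ζ = ∏ i : Fin (n+1), (z ζ - a i)) ∧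
    (∀ ζ : ℂ, ‖ζ‖ = 1 →
      ‖u ζ‖ = ‖v ζ‖ ∧ ‖z ζ‖ = r) := by
  set J := univ.filter fun i : Fin (n+1) => (i:ℕ) < k ∧ i ∉ I
  have hJ : ∀ i ∈ J, (i:ℕ) < k := fun i hi => (mem_filter.mp hi).2.1
  have hu' : u = fun ζ => g ζ * ∏ i ∈ I, blaschkeFactor r (a i) ζ := hu
  have hv' : v = fun ζ => g ζ * ∏ i ∈ J, blaschkeFactor r (a i) ζ := hv
  subst hu' hv' hz
  refine ⟨fun i hi ζ hζ => ofReal_sub_conj_mul_ne_zero (hlt i hi) (by simpa using hζ),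
    hg.mul (.finset_prod fun i hi => isHolomorphicDiskComponent_blaschkeFactor (hlt i (hI i hi))),
    hg.mul (.finset_prod fun i hi => isHolomorphicDiskComponent_blaschkeFactor (hlt i (hJ i hi))),
    .of_differentiableOn (by fun_prop), fun ζ hζ => ?_, fun ζ hζ => ⟨?_, ?_⟩⟩
  · calc g ζ * (∏ i ∈ I, blaschkeFactor r (a i) ζ) * (g ζ * ∏ i ∈ J, blaschkeFactor r (a i) ζ)
        = g ζ ^ 2 * ∏ i ∈ univ.filter fun i : Fin (n+1) => (i:ℕ) < k, blaschkeFactor r (a i) ζ := by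
          rw [← prod_mul_prod_filter_and_not_mem hI]; ring
      _ = ∏ i, ((r:ℂ) * ζ - a i) := by
          rw [hg2 ζ hζ]
          exact prod_ite_mul_prod_filter _ fun i hi =>
            sub_conj_mul_mul_blaschkeFactor (hlt i hi) (by simpa using hζ)
  · simp only [norm_mul, norm_prod]
    rw [prod_eq_one fun i hi => norm_blaschkeFactor (hlt i (hI i hi)) hζ,
      prod_eq_one fun i hi => norm_blaschkeFactor (hlt i (hJ i hi)) hζ]
  · simp [hζ, abs_of_pos hr]

/-- Explicit Blaschke-product holomorphic disks in the class `β_{k,I}`: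
for `|a i| < r` (`i < k`), `|a i| > r` (`i ≥ k`), `I ⊆ {0,…,k−1}` and a square root `g`
of `∏_{i<k} (r − conj(a i)·ζ) · ∏_{i≥k} (r·ζ − a i)`, the factors `r − conj(a i)·ζ`
are nonvanishing on `𝔻`, the functions `𝔲, 𝔳, 𝔷` are holomorphic disk components with
`𝔲·𝔳 = ∏_i (𝔷 − a i) = h(𝔷)` on `𝔻`, and `|𝔲| = |𝔳|`, `|𝔷| = r` on the unit circle,
so the disk maps into `X̄ = {uv = h(z)}` with boundary on the fiber `L₍₀,ᵣ₎`. -/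
theorem blaschke_disks (n : ℕ) (a : Fin (n+1) → ℂ) (ha : Function.Injective a)
    (k : ℕ) (hk : k ≤ n + 1) (r : ℝ) (hr : 0 < r)
    (hlt : ∀ i : Fin (n+1), (i:ℕ) < k → ‖a i‖ < r)
    (hgt : ∀ i : Fin (n+1), k ≤ (i:ℕ) → r < ‖a i‖)
    (I : Finset (Fin (n+1))) (hI : ∀ i ∈ I, (i:ℕ) < k)
    (g : ℂ → ℂ) (hg : IsHolomorphicDiskComponent g)
    (hg2 : ∀ ζ ∈ Metric.closedBall (0:ℂ) 1,
      (g ζ)^2 = ∏ i : Fin (n+1),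
        (if (i:ℕ) < k then (r:ℂ) - (starRingEnd ℂ) (a i) * ζ else (r:ℂ) * ζ - a i))
    (u v z : ℂ → ℂ)
    (hu : u = fun ζ => g ζ *
      ∏ i ∈ I, ((r:ℂ) * ζ - a i) / ((r:ℂ) - (starRingEnd ℂ) (a i) * ζ))
    (hv : v = fun ζ => g ζ *
      ∏ i ∈ Finset.univ.filter (fun i : Fin (n+1) => (i:ℕ) < k ∧ i ∉ I),
        ((r:ℂ) * ζ - a i) / ((r:ℂ) - (starRingEnd ℂ) (a i) * ζ))
    (hz : z = fun ζ => (r:ℂ) * ζ) :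
    (∀ i : Fin (n+1), (i:ℕ) < k → ∀ ζ ∈ Metric.closedBall (0:ℂ) 1,
      (r:ℂ) - (starRingEnd ℂ) (a i) * ζ ≠ 0) ∧
    IsHolomorphicDiskComponent u ∧ IsHolomorphicDiskComponent v ∧
    IsHolomorphicDiskComponent z ∧
    (∀ ζ ∈ Metric.closedBall (0:ℂ) 1,
      u ζ * v ζ = ∏ i : Fin (n+1), (z ζ - a i)) ∧
    (∀ ζ : ℂ, ‖ζ‖ = 1 →
      ‖u ζ‖ = ‖v ζ‖ ∧ ‖z ζ‖ = r) :=
  blaschke_disks_general n a k r hr hlt I hI g hg hg2 u v z hu hv hz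
end
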